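/- arXiv:2412.17930 — 5 statements merged into one kernel-verified Lean document; each statement's English description precedes it below -/
import Mathlib

section
/- For every finite sequence f of unfolding instructions of length n ≥ 1, the number of maximal runs (maximal blocks of consecutive equal symbols) in the paperfolding word P_f equals 2^{n-1}. -/
/-!
Let `c(w)` be the number of adjacent positions of `w` carrying different symbols, so that a
nonempty word has `c(w) + 1` runs. Reversing and negating a word preserve `c`, so
`c(P_f · a · (-P_f^R)) = 2 c(P_f) + δ`, where `δ` counts the changes at the two seams
`x a` and `a (-x)`, `x` being the last symbol of `P_f`. Since `x, a ∈ {±1}`, exactly one of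
`x ≠ a` and `a ≠ -x` holds, so `δ = 1` and the number of runs doubles with each instruction.
-/

/-- Paperfolding word; instructions are given with the most recent (last) instruction first. -/
def foldAux : List ℤ → List ℤ
  | [] => []
  | a :: f => foldAux f ++ a :: (foldAux f).reverse.map (fun x => -x)

/-- `paper f` is the finite paperfolding word `P_f` for instructions `f = [f_0, f_1, …]`,
satisfying `P_ε = ε` and `P_{f·a} = P_f · a · (-P_f^R)`. -/
def paper (f : List ℤ) : List ℤ := foldAux f.reverse

/-- The sequence of lengths of the maximal runs (maximal blocks of equal symbols) of `w`. -/
def runLengths (w : List ℤ) : List ℕ := (w.splitBy (fun a b => a == b)).map List.length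

/-- `p` (indexed from 1) is the infinite paperfolding sequence with instructions `f`,
i.e. every finite paperfolding word of a prefix of `f` is a prefix of `p`. -/
def IsLimit (f : ℕ → ℤ) (p : ℕ → ℤ) : Prop :=
  ∀ m k, k < (paper ((List.range m).map f)).length →
    p (k + 1) = (paper ((List.range m).map f)).getD k 0

/-- `E` enumerates, in increasing order (`E 1 < E 2 < ⋯`, with the convention `E 0 = 0`),
the ending positions of the maximal runs of the sequence `p` (indexed from 1):
position `m ≥ 1` ends a run iff `p m ≠ p (m+1)`. -/
def IsRunEnds (p : ℕ → ℤ) (E : ℕ → ℕ) : Prop :=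
  E 0 = 0 ∧ StrictMono E ∧ ∀ m, 1 ≤ m → ((∃ n, 1 ≤ n ∧ E n = m) ↔ p m ≠ p (m + 1))

/-- The number of maximal runs of `w`: the number of indices `i` (1-indexed, `1 ≤ i ≤ |w|`)
with `i = 1` or `w[i] ≠ w[i-1]` (here 0-indexed: `i = 0` or `w[i] ≠ w[i-1]`). -/
def runCount (w : List ℤ) : ℕ :=
  ((List.range w.length).filter (fun i => i == 0 || w.getD i 0 != w.getD (i - 1) 0)).length

section changeCount

variable {α β : Type*} [DecidableEq α] [DecidableEq β]

def changeCount : List α → ℕ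
  | a :: b :: t => (if a = b then 0 else 1) + changeCount (b :: t)
  | _ => 0

@[simp]
lemma changeCount_singleton (a : α) : changeCount [a] = 0 := rfl

@[simp]
lemma changeCount_cons_cons (a b : α) (t : List α) :
    changeCount (a :: b :: t) = (if a = b then 0 else 1) + changeCount (b :: t) := rfl

lemma changeCount_append_cons (u : List α) (b : α) (v : List α) :
    changeCount (u ++ b :: v) = changeCount (u ++ [b]) + changeCount (b :: v) := by
  induction u with
  | nil => simp
  | cons a u ih =>
    cases u with
    | nil => simp
    | cons c u => simp_all [add_assoc]

lemma changeCount_reverse (l : List α) : changeCount l.reverse = changeCount l := by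
  induction l with
  | nil => rfl
  | cons a l ih =>
    cases l with
    | nil => rfl
    | cons b t =>
      have hrev : (a :: b :: t).reverse = t.reverse ++ b :: [a] := by simp
      rw [hrev, changeCount_append_cons, ← List.reverse_cons, ih]
      simp [eq_comm, add_comm]

lemma changeCount_map {f : α → β} (hf : f.Injective) (l : List α) :
    changeCount (l.map f) = changeCount l := by
  induction l with
  | nil => rfl
  | cons a l ih =>
    cases l with
    | nil => rfl
    | cons b t => simp_all [hf.eq_iff]

lemma changeCount_cons_eq_countP (a d : α) (w : List α) :
    changeCount (a :: w) =
      (List.range w.length).countP (fun i => w.getD i d ≠ (a :: w).getD i d) := by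
  induction w generalizing a with
  | nil => rfl
  | cons b t ih =>
    rw [List.length_cons, List.range_succ_eq_map, List.countP_cons, List.countP_map,
      changeCount_cons_cons, ih b]
    simp only [Function.comp_def, List.getD_cons_succ, List.getD_cons_zero]
    by_cases h : a = b
    · simp [h]
    · simp [h, Ne.symm h, add_comm]

end changeCount

lemma runCount_cons (a : ℤ) (w : List ℤ) : runCount (a :: w) = changeCount (a :: w) + 1 := by
  rw [changeCount_cons_eq_countP a 0, List.countP_eq_length_filter, runCount, List.length_cons,
    List.range_succ_eq_map, List.filter_cons, List.filter_map]
  simp [Function.comp_def, bne, beq_eq_decide]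

lemma changeCount_fold {w : List ℤ} {a x : ℤ} (hw : w.getLast? = some x)
    (hx : x = -1 ∨ x = 1) (ha : a = -1 ∨ a = 1) :
    changeCount (w ++ a :: w.reverse.map (fun y => -y)) = 2 * changeCount w + 1 := by
  obtain ⟨w', rfl⟩ := List.getLast?_eq_some_iff.mp hw
  set m := (w' ++ [x]).reverse.map (fun y => -y) with hm
  have hm_cons : m = -x :: w'.reverse.map (fun y => -y) := by simp [hm]
  have hmirror : changeCount m = changeCount (w' ++ [x]) :=
    (changeCount_map neg_injective _).trans (changeCount_reverse _)
  have hseam : (if x = a then 0 else 1) + (if a = -x then 0 else 1) = 1 := by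
    rcases hx with rfl | rfl <;> rcases ha with rfl | rfl <;> norm_num
  rw [List.append_assoc, List.singleton_append, changeCount_append_cons, changeCount_cons_cons,
    hm_cons, changeCount_cons_cons, ← hm_cons, hmirror]
  omega

lemma paper_append_singleton (f : List ℤ) (a : ℤ) :
    paper (f ++ [a]) = paper f ++ a :: (paper f).reverse.map (fun x => -x) := by
  simp [paper, foldAux]

lemma paper_ne_nil {f : List ℤ} (hf : f ≠ []) : paper f ≠ [] := by
  obtain ⟨a, l, hl⟩ := List.exists_cons_of_ne_nil (List.reverse_ne_nil_iff.mpr hf)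
  simp [paper, hl, foldAux]

lemma mem_paper {f : List ℤ} {x : ℤ} (hx : x ∈ paper f) : x ∈ f ∨ -x ∈ f := by
  induction f using List.reverseRecOn generalizing x with
  | nil => simp [paper, foldAux] at hx
  | append_singleton g a ih =>
    rw [paper_append_singleton] at hx
    simp only [List.mem_append, List.mem_cons, List.mem_map, List.mem_reverse] at hx
    rcases hx with hx | rfl | ⟨y, hy, rfl⟩
    · exact (ih hx).imp (List.mem_append_left _) (List.mem_append_left _)
    · simp
    · rw [neg_neg]
      exact (ih hy).symm.imp (List.mem_append_left _) (List.mem_append_left _)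

lemma changeCount_paper_add_one {f : List ℤ} (hf : ∀ a ∈ f, a = -1 ∨ a = 1) :
    changeCount (paper f) + 1 = 2 ^ (f.length - 1) := by
  induction f using List.reverseRecOn with
  | nil => rfl
  | append_singleton g a ih =>
    have hg : ∀ b ∈ g, b = -1 ∨ b = 1 := fun b hb => hf b (List.mem_append_left _ hb)
    have ha : a = -1 ∨ a = 1 := hf a (by simp)
    rcases eq_or_ne g [] with rfl | hne
    · rfl
    obtain ⟨x, hx⟩ : ∃ x, (paper g).getLast? = some x :=
      Option.isSome_iff_exists.mp (List.getLast?_isSome.mpr (paper_ne_nil hne))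
    have hx_sign : x = -1 ∨ x = 1 := by
      rcases mem_paper (List.mem_of_mem_getLast? hx) with h | h
      · exact hg x h
      · rcases hg _ h with h | h <;> omega
    have hlen : 0 < g.length := List.length_pos_of_ne_nil hne
    rw [paper_append_singleton, changeCount_fold hx hx_sign ha, List.length_append,
      List.length_singleton, show g.length + 1 - 1 = g.length - 1 + 1 by omega, pow_succ,
      ← ih hg]
    ring

theorem paper_runCount (f : List ℤ) (hf : ∀ a ∈ f, a = -1 ∨ a = 1) (hn : 1 ≤ f.length) :
    runCount (paper f) = 2 ^ (f.length - 1) := by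
  obtain ⟨a, w, hw⟩ := List.exists_cons_of_ne_nil (paper_ne_nil (List.ne_nil_of_length_pos hn))
  rw [hw, runCount_cons, ← hw, changeCount_paper_add_one hf]
end

section
/- Every maximal run in any finite paperfolding word P_f (with |f| ≥ 1) has length 1, 2, or 3. Consequently, every maximal run in any infinite paperfolding sequence has length 1, 2, or 3. -/
/-!
In `P_{a·g}` the first fold creates the creases at the even positions (counting from `0`), and
they read `a, -a, a, -a, …`: the second half of `P_{a·g}` is the reversed negated first half,
whose length is odd. Any four consecutive positions contain two even positions `2m, 2m+2`,
which carry opposite letters, so no run is longer than three. The infinite sequence has the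
same alternation at its odd positions (counting from `1`), since its prefixes are such words.
-/

lemma foldAux_length (f : List ℤ) : (foldAux f).length = 2 ^ f.length - 1 := by
  induction f with
  | nil => rfl
  | cons a f ih =>
    have : 1 ≤ 2 ^ f.length := Nat.one_le_two_pow
    simp only [foldAux, List.length_append, List.length_cons, List.length_map,
      List.length_reverse, ih, pow_succ]
    omega

lemma paper_length (f : List ℤ) : (paper f).length = 2 ^ f.length - 1 := by
  simp [paper, foldAux_length]

lemma foldAux_append_singleton_getElem?_two_mul (a : ℤ) (g : List ℤ) (m : ℕ)
    (hm : 2 * m < 2 ^ (g.length + 1) - 1) :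
    (foldAux (g ++ [a]))[2 * m]? = some ((-1) ^ m * a) := by
  induction g generalizing m with
  | nil =>
    obtain rfl : m = 0 := by simp at hm; omega
    simp [foldAux]
  | cons b g ih =>
    set W := foldAux (g ++ [a])
    have hW : W.length = 2 * 2 ^ g.length - 1 := by
      simp [W, foldAux_length, pow_succ, mul_comm]
    have : 1 ≤ 2 ^ g.length := Nat.one_le_two_pow
    change (W ++ b :: W.reverse.map (fun x => -x))[2 * m]? = _
    rcases lt_or_ge (2 * m) W.length with hlt | hge
    · rw [List.getElem?_append_left hlt]
      exact ih m (by rw [pow_succ]; omega)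
    · -- the mirror image of `2 * m` in the reversed copy is the even position `2 * k`
      set k := 2 * 2 ^ g.length - 1 - m
      simp only [List.length_cons, pow_succ] at hm
      have hsign : (-1 : ℤ) ^ m = (-1) ^ (k + 1) := by
        rw [neg_one_pow_eq_pow_mod_two, neg_one_pow_eq_pow_mod_two (n := k + 1),
          show m % 2 = (k + 1) % 2 by omega]
      rw [List.getElem?_append_right hge,
        show 2 * m - W.length = (2 * m - W.length - 1) + 1 by omega, List.getElem?_cons_succ,
        List.getElem?_map, List.getElem?_reverse (by omega),
        show W.length - 1 - (2 * m - W.length - 1) = 2 * k by omega,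
        ih k (by rw [pow_succ]; omega), hsign]
      simp [pow_succ]

lemma paper_cons_getElem?_two_mul (a : ℤ) (f : List ℤ) (m : ℕ)
    (hm : 2 * m < (paper (a :: f)).length) :
    (paper (a :: f))[2 * m]? = some ((-1) ^ m * a) := by
  rw [paper_length] at hm
  simpa [paper] using foldAux_append_singleton_getElem?_two_mul a f.reverse m (by simpa using hm)

lemma neg_one_pow_mul_ne_neg_one_pow_succ_mul {R : Type*} [Ring R] [IsAddTorsionFree R]
    {c : R} (hc : c ≠ 0) (m : ℕ) : (-1) ^ m * c ≠ (-1) ^ (m + 1) * c := by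
  rw [pow_succ, mul_neg_one, neg_mul, Ne, self_eq_neg]
  exact fun h => hc (((isUnit_neg_one (α := R)).pow m).mul_right_eq_zero.1 h)

lemma not_four_consecutive_eq {α : Type*} {u : ℕ → α} {N : ℕ}
    (hu : ∀ m, 2 * m + 2 < N → u (2 * m) ≠ u (2 * m + 2)) {i : ℕ} (hi : i + 3 < N)
    (h₀ : u i = u (i + 1)) (h₁ : u (i + 1) = u (i + 2)) (h₂ : u (i + 2) = u (i + 3)) : False := by
  obtain ⟨m, rfl | rfl⟩ := Nat.even_or_odd' i
  · exact hu m (by omega) (h₀.trans h₁)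
  · exact hu (m + 1) (by omega) (h₁.trans h₂)

lemma pos_of_mem_runLengths {w : List ℤ} {r : ℕ} (hr : r ∈ runLengths w) : 0 < r := by
  obtain ⟨c, hc, rfl⟩ := List.mem_map.1 hr
  exact List.length_pos_iff.2 (List.ne_nil_of_mem_splitBy hc)

lemma exists_consecutive_eq_of_mem_runLengths {w : List ℤ} {r : ℕ} (hr : r ∈ runLengths w) :
    ∃ k, k + r ≤ w.length ∧ ∀ i, i + 1 < r → w[k + i]? = w[k + i + 1]? := by
  obtain ⟨c, hc, rfl⟩ := List.mem_map.1 hr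
  have hinfix : c <:+: w := List.flatten_splitBy _ w ▸ List.infix_of_mem_flatten hc
  obtain ⟨k, hk, hget⟩ := List.infix_iff_getElem?.1 hinfix
  refine ⟨k, by omega, fun i hi => ?_⟩
  rw [add_comm k i, hget i (by omega), add_right_comm, hget (i + 1) hi]
  simpa using (List.isChain_of_mem_splitBy hc).getElem i hi

lemma le_three_of_mem_runLengths_paper_cons {a : ℤ} (ha : a ≠ 0) (f : List ℤ) {r : ℕ}
    (hr : r ∈ runLengths (paper (a :: f))) : r ≤ 3 := by
  by_contra! hr3
  obtain ⟨k, hk, hrun⟩ := exists_consecutive_eq_of_mem_runLengths hr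
  have hu : ∀ m, 2 * m + 2 < (paper (a :: f)).length →
      (paper (a :: f))[2 * m]? ≠ (paper (a :: f))[2 * m + 2]? := by
    intro m hm
    rw [paper_cons_getElem?_two_mul a f m (by omega),
      show 2 * m + 2 = 2 * (m + 1) by ring, paper_cons_getElem?_two_mul a f (m + 1) (by omega),
      Ne, Option.some_inj]
    exact neg_one_pow_mul_ne_neg_one_pow_succ_mul ha m
  refine not_four_consecutive_eq hu (i := k) (by omega) ?_ ?_ ?_
  · simpa using hrun 0 (by omega)
  · simpa using hrun 1 (by omega)
  · simpa using hrun 2 (by omega)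

lemma IsLimit.apply_two_mul_add_one {f p : ℕ → ℤ} (h : IsLimit f p) (m : ℕ) :
    p (2 * m + 1) = (-1) ^ m * f 0 := by
  have hlen : 2 * m < (paper ((List.range (2 * m + 1)).map f)).length := by
    have := (2 * m + 1).lt_two_pow_self
    rw [paper_length, List.length_map, List.length_range]
    omega
  rw [h _ _ hlen, List.range_succ_eq_map, List.map_cons, List.getD_eq_getElem?_getD,
    paper_cons_getElem?_two_mul _ _ _ (by simpa [List.range_succ_eq_map] using hlen)]
  rfl

lemma IsRunEnds.apply_eq_apply_succ {p : ℕ → ℤ} {E : ℕ → ℕ} (hE : IsRunEnds p E) {n m : ℕ}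
    (h₁ : E n < m) (h₂ : m < E (n + 1)) : p m = p (m + 1) := by
  by_contra hne
  obtain ⟨k, -, rfl⟩ := (hE.2.2 m (by omega)).2 hne
  have := hE.2.1.lt_iff_lt.1 h₁
  have := hE.2.1.lt_iff_lt.1 h₂
  omega

lemma IsRunEnds.sub_le_three {f p : ℕ → ℤ} {E : ℕ → ℕ} (hf : f 0 ≠ 0) (hp : IsLimit f p)
    (hE : IsRunEnds p E) (n : ℕ) : E (n + 1) - E n ≤ 3 := by
  by_contra! h
  have hu : ∀ m, 2 * m + 2 < E n + 4 → p (2 * m + 1) ≠ p (2 * m + 2 + 1) := by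
    intro m _
    rw [hp.apply_two_mul_add_one, show 2 * m + 2 + 1 = 2 * (m + 1) + 1 by ring,
      hp.apply_two_mul_add_one]
    exact neg_one_pow_mul_ne_neg_one_pow_succ_mul hf m
  exact not_four_consecutive_eq (u := fun k => p (k + 1)) hu (i := E n) (by omega)
    (hE.apply_eq_apply_succ (n := n) (by omega) (by omega))
    (hE.apply_eq_apply_succ (n := n) (by omega) (by omega))
    (hE.apply_eq_apply_succ (n := n) (by omega) (by omega))

theorem run_lengths_le_three :
    (∀ f : List ℤ, (∀ a ∈ f, a = -1 ∨ a = 1) → 1 ≤ f.length →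
      ∀ r ∈ runLengths (paper f), r = 1 ∨ r = 2 ∨ r = 3) ∧
    (∀ (f p : ℕ → ℤ) (E : ℕ → ℕ), (∀ n, f n = -1 ∨ f n = 1) → IsLimit f p →
      IsRunEnds p E → ∀ n, 1 ≤ n →
        E n - E (n - 1) = 1 ∨ E n - E (n - 1) = 2 ∨ E n - E (n - 1) = 3) := by
  have ne_zero {x : ℤ} (hx : x = -1 ∨ x = 1) : x ≠ 0 := by rcases hx with rfl | rfl <;> decide
  constructor
  · rintro (_ | ⟨a, f⟩) hf hlen r hr
    · simp at hlen
    have := pos_of_mem_runLengths hr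
    have := le_three_of_mem_runLengths_paper_cons (ne_zero (hf a List.mem_cons_self)) f hr
    omega
  · intro f p E hf hp hE n hn
    obtain ⟨n, rfl⟩ : ∃ k, n = k + 1 := ⟨n - 1, by omega⟩
    have := hE.2.1 (Nat.lt_add_one n)
    have := hE.sub_le_three (ne_zero (hf 0)) hp n
    simp only [Nat.add_sub_cancel]
    omega
end

section
/- The only squares (factors of the form zz with z nonempty) occurring in the run-length sequence of any infinite paperfolding sequence are 22, 123123, and 321321. -/
/-!
The odd-indexed terms of a paperfolding sequence alternate, so for each `k ≥ 1` exactly one of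
`2k - 1`, `2k` ends a run: the `k`-th run ends at `2k - c k`, where `c k` records whether
`P(2k) = P(2k+1)`. Hence `R k = 2 + c (k-1) - c k`, and a square of period `n` in `R` becomes an
overlap of period `n` in `c`. The Boolean sequence `c` is again a paperfolding sequence, and the
overlaps of a paperfolding sequence have period `1`, or period `3` with shape `x x̄ x̄ x x̄ x̄ x`: the
alternation of the odd-indexed terms rules out even periods, and whenever it does not settle the
matter one passes to the even-indexed subsequence, which is paperfolding again. Reading back
through `R k = 2 + c (k-1) - c k` gives `22`, `123123` and `321321`.
-/

/-- The `n`-th term (`n ≥ 1`) of `P_f` in closed form: `2^a (4b+1) ↦ f a` and `2^a (4b+3) ↦ -f a`.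
The value at `0` is a junk `0`. -/
def paperSeq (f : ℕ → ℤ) (n : ℕ) : ℤ :=
  if n = 0 then 0
  else if Even n then paperSeq (fun i => f (i + 1)) (n / 2)
  else if Even (n / 2) then f 0 else -f 0
termination_by n
decreasing_by omega

section paperSeq

variable (f : ℕ → ℤ)

theorem paperSeq_zero : paperSeq f 0 = 0 := by
  rw [paperSeq, if_pos rfl]

theorem paperSeq_two_mul (n : ℕ) : paperSeq f (2 * n) = paperSeq (fun i => f (i + 1)) n := by
  rcases Nat.eq_zero_or_pos n with rfl | hn
  · simp only [mul_zero, paperSeq_zero]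
  · rw [paperSeq, if_neg (by omega), if_pos (even_two_mul n), Nat.mul_div_cancel_left n two_pos]

theorem paperSeq_two_mul_add_one (n : ℕ) :
    paperSeq f (2 * n + 1) = if Even n then f 0 else -f 0 := by
  rw [paperSeq, if_neg (by omega), if_neg (by simp [parity_simps]),
    show (2 * n + 1) / 2 = n by omega]

theorem paperSeq_two_pow_mul_four_mul_add_one (a b : ℕ) :
    paperSeq f (2 ^ a * (4 * b + 1)) = f a := by
  induction a generalizing f with
  | zero =>
    rw [pow_zero, one_mul, show 4 * b + 1 = 2 * (2 * b) + 1 by ring, paperSeq_two_mul_add_one,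
      if_pos (even_two_mul b)]
  | succ a ih => rw [pow_succ', mul_assoc, paperSeq_two_mul, ih]

theorem paperSeq_two_pow_mul_four_mul_add_three (a b : ℕ) :
    paperSeq f (2 ^ a * (4 * b + 3)) = -f a := by
  induction a generalizing f with
  | zero =>
    rw [pow_zero, one_mul, show 4 * b + 3 = 2 * (2 * b + 1) + 1 by ring, paperSeq_two_mul_add_one,
      if_neg (by simp [parity_simps])]
  | succ a ih => rw [pow_succ', mul_assoc, paperSeq_two_mul, ih]

theorem paperSeq_two_pow (a : ℕ) : paperSeq f (2 ^ a) = f a := by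
  simpa using paperSeq_two_pow_mul_four_mul_add_one f a 0

theorem paperSeq_eq_one_or_neg_one (hf : ∀ n, f n = -1 ∨ f n = 1) {n : ℕ} (hn : n ≠ 0) :
    paperSeq f n = 1 ∨ paperSeq f n = -1 := by
  obtain ⟨a, q, hq, rfl⟩ := Nat.exists_eq_two_pow_mul_odd hn
  obtain ⟨b, rfl | rfl⟩ : ∃ b, q = 4 * b + 1 ∨ q = 4 * b + 3 := by
    obtain ⟨r, rfl⟩ := hq; exact ⟨r / 2, by omega⟩
  · rw [paperSeq_two_pow_mul_four_mul_add_one]; rcases hf a with h | h <;> simp [h]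
  · rw [paperSeq_two_pow_mul_four_mul_add_three]; rcases hf a with h | h <;> simp [h]

theorem paperSeq_two_pow_add (m x : ℕ) (hx : 1 ≤ x) (hxm : x < 2 ^ m) :
    paperSeq f (2 ^ m + x) = -paperSeq f (2 ^ m - x) := by
  induction m generalizing f x with
  | zero => omega
  | succ m ih =>
    rcases Nat.even_or_odd' x with ⟨y, rfl | rfl⟩
    · rw [pow_succ', ← mul_add, ← Nat.mul_sub, paperSeq_two_mul, paperSeq_two_mul]
      exact ih _ y (by omega) (by rw [pow_succ] at hxm; omega)
    · obtain ⟨c, hc⟩ : ∃ c, 2 ^ (m + 1) = 2 * c := ⟨2 ^ m, pow_succ' 2 m⟩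
      have hc1 : 1 ≤ c := by have := Nat.one_le_two_pow (n := m); omega
      rw [hc, show 2 * c + (2 * y + 1) = 2 * (c + y) + 1 by ring,
        show 2 * c - (2 * y + 1) = 2 * (c - y - 1) + 1 by omega,
        paperSeq_two_mul_add_one, paperSeq_two_mul_add_one]
      rcases m with _ | m
      · obtain rfl : y = 0 := by omega
        obtain rfl : c = 1 := by omega
        simp
      · have hce : c % 2 = 0 := by rw [pow_succ'] at hc; omega
        simp only [Nat.even_iff]
        split_ifs <;> omega

theorem paper_range_map (m : ℕ) :
    paper ((List.range m).map f) = (List.range (2 ^ m - 1)).map (fun k => paperSeq f (k + 1)) := by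
  induction m with
  | zero => rfl
  | succ m ih =>
    have h1 := Nat.one_le_two_pow (n := m)
    have hsplit : 2 ^ (m + 1) - 1 = (2 ^ m - 1 + 1) + (2 ^ m - 1) := by rw [pow_succ]; omega
    rw [List.range_succ, List.map_append, List.map_singleton, paper, List.reverse_append,
      List.reverse_singleton, List.singleton_append, foldAux, ← paper, ih, hsplit, List.range_add,
      List.range_succ, List.map_append, List.map_append, List.map_singleton, List.append_assoc,
      List.singleton_append, Nat.sub_add_cancel h1, paperSeq_two_pow, ← List.map_reverse,
      List.range_eq_range', List.reverse_range', List.map_map, List.map_map]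
    congr 2
    rw [← List.range_eq_range', List.map_map]
    refine List.map_congr_left fun x hx => ?_
    rw [List.mem_range] at hx
    simp only [Function.comp_apply]
    rw [show 2 ^ m + x + 1 = 2 ^ m + (x + 1) by ring,
      paperSeq_two_pow_add f m (x + 1) (by omega) (by omega)]
    congr 2
    omega

end paperSeq

theorem IsLimit.eq_paperSeq {f p : ℕ → ℤ} (hp : IsLimit f p) {m : ℕ} (hm : 1 ≤ m) :
    p m = paperSeq f m := by
  obtain ⟨k, rfl⟩ : ∃ k, m = k + 1 := ⟨m - 1, by omega⟩
  have hk : k < 2 ^ (k + 1) - 1 := by have := Nat.lt_two_pow_self (n := k + 1); omega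
  rw [hp (k + 1) k (by rw [paper_range_map, List.length_map, List.length_range]; exact hk),
    paper_range_map]
  simp [hk]

theorem IsRunEnds.range_eq {p : ℕ → ℤ} {E : ℕ → ℕ} (hE : IsRunEnds p E) :
    Set.range E = {m | m = 0 ∨ (1 ≤ m ∧ p m ≠ p (m + 1))} := by
  obtain ⟨h0, hmono, hends⟩ := hE
  ext m
  constructor
  · rintro ⟨k, rfl⟩
    rcases Nat.eq_zero_or_pos k with rfl | hk
    · exact Or.inl h0
    · have : E 0 < E k := hmono hk
      exact Or.inr ⟨by omega, (hends _ (by omega)).1 ⟨k, hk, rfl⟩⟩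
  · rintro (rfl | ⟨hm, hne⟩)
    · exact ⟨0, h0⟩
    · obtain ⟨k, -, hk⟩ := (hends m hm).2 hne
      exact ⟨k, hk⟩

theorem IsRunEnds.unique {p : ℕ → ℤ} {E E' : ℕ → ℕ} (hE : IsRunEnds p E) (hE' : IsRunEnds p E') :
    E = E' :=
  (hE.2.1.range_inj hE'.2.1).1 (by rw [hE.range_eq, hE'.range_eq])

theorem IsRunEnds.congr {p q : ℕ → ℤ} {E : ℕ → ℕ} (hE : IsRunEnds p E)
    (hpq : ∀ m, 1 ≤ m → p m = q m) : IsRunEnds q E :=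
  ⟨hE.1, hE.2.1, fun m hm => by rw [← hpq m hm, ← hpq (m + 1) (by omega)]; exact hE.2.2 m hm⟩

/-- Read from index `1`: the value at `0` is unconstrained. -/
def IsPaperfolding (c : ℕ → Bool) : Prop :=
  ∃ g : ℕ → Bool, ∀ a b, c (2 ^ a * (4 * b + 1)) = g a ∧ c (2 ^ a * (4 * b + 3)) = !g a

namespace IsPaperfolding

variable {c : ℕ → Bool}

theorem comp_two_mul (hc : IsPaperfolding c) : IsPaperfolding (fun m => c (2 * m)) := by
  obtain ⟨g, hg⟩ := hc
  refine ⟨fun a => g (a + 1), fun a b => ?_⟩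
  simp only [← mul_assoc, ← pow_succ']
  exact hg (a + 1) b

theorem apply_add_two_mul (hc : IsPaperfolding c) {m k : ℕ} (hm : Odd m) (hk : Odd k) :
    c (m + 2 * k) = !c m := by
  obtain ⟨g, hg⟩ := hc
  have h1 : ∀ b, c (4 * b + 1) = g 0 := fun b => by simpa using (hg 0 b).1
  have h3 : ∀ b, c (4 * b + 3) = !g 0 := fun b => by simpa using (hg 0 b).2
  obtain ⟨l, rfl⟩ := hk
  obtain ⟨b, rfl | rfl⟩ : ∃ b, m = 4 * b + 1 ∨ m = 4 * b + 3 := by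
    obtain ⟨r, rfl⟩ := hm; exact ⟨r / 2, by omega⟩
  · rw [show 4 * b + 1 + 2 * (2 * l + 1) = 4 * (b + l) + 3 by ring, h1, h3]
  · rw [show 4 * b + 3 + 2 * (2 * l + 1) = 4 * (b + l + 1) + 1 by ring, h1, h3, Bool.not_not]

theorem odd_of_square (hc : IsPaperfolding c) {n j : ℕ} (hn : 1 ≤ n)
    (hsq : ∀ t < n, c (j + t) = c (j + n + t)) : Odd n := by
  induction n using Nat.strong_induction_on generalizing c j with
  | _ n ih =>
    by_contra hodd
    obtain ⟨k, rfl⟩ : ∃ k, n = 2 * k := ⟨n / 2, by rw [Nat.not_odd_iff] at hodd; omega⟩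
    rcases Nat.even_or_odd k with hk | hk
    · -- the even positions of the square form a square of period `k`
      refine (Nat.not_odd_iff_even.mpr hk) (ih k (by omega) hc.comp_two_mul (j := (j + 1) / 2)
        (by omega) fun t ht => ?_)
      convert hsq ((j + 1) / 2 * 2 - j + 2 * t) (by omega) using 2 <;> omega
    · obtain ⟨s, hs, hodd_pos⟩ : ∃ s < 2, Odd (j + s) := by
        rcases Nat.even_or_odd j with hj | hj
        · exact ⟨1, by omega, hj.add_one⟩
        · exact ⟨0, by omega, hj⟩
      have := hc.apply_add_two_mul hodd_pos hk
      rw [show j + s + 2 * k = j + 2 * k + s by ring, ← hsq s (by omega)] at this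
      simp at this

theorem even_of_overlap (hc : IsPaperfolding c) {n j : ℕ} (hn : Odd n)
    (hper : ∀ t ≤ n, c (j + t) = c (j + n + t)) : Even j := by
  by_contra hj
  have := hc.apply_add_two_mul (Nat.not_even_iff_odd.mp hj) hn
  have h0 := hper 0 (Nat.zero_le n)
  rw [two_mul, ← add_assoc, ← hper n le_rfl, ← add_zero (j + n), ← h0, add_zero] at this
  simp at this

theorem lt_five_of_overlap (hc : IsPaperfolding c) {n j : ℕ} (hn : Odd n) (hj : Even j)
    (hper : ∀ t ≤ n, c (j + t) = c (j + n + t)) : n < 5 := by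
  have hstep : ∀ q y, Odd q → y = q + 2 → c y = !c q := by
    rintro q _ hq rfl
    exact hc.apply_add_two_mul hq odd_one
  have hnoalt : ∀ x, Odd x → (∀ y, x ≤ y → y ≤ x + 1 → c (2 * y + 2) = !c (2 * y)) → False := by
    intro x hx halt
    have := hc.comp_two_mul.apply_add_two_mul hx odd_one
    beta_reduce at this
    rw [show 2 * (x + 2 * 1) = 2 * (x + 1) + 2 by ring, halt (x + 1) (by omega) le_rfl,
      show 2 * (x + 1) = 2 * x + 2 by ring, halt x le_rfl (by omega), Bool.not_not] at this
    simp at this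
  by_contra h5
  obtain ⟨h, rfl⟩ := hn
  obtain ⟨m, rfl⟩ := hj
  have hper' : ∀ t ≤ 2 * h + 1, ∀ x y, x = m + m + t → y = m + m + (2 * h + 1) + t → c x = c y := by
    rintro t ht _ _ rfl rfl
    exact hper t ht
  -- Through `hper`, even positions of one half face odd positions of the other half,
  -- and odd positions alternate.
  have halt₁ : ∀ x, m ≤ x → x < m + h → c (2 * x + 2) = !c (2 * x) := by
    intro x hx₁ hx₂
    rw [hper' (2 * x - 2 * m) (by omega) (2 * x) (2 * x + 2 * h + 1) (by omega) (by omega),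
      hper' (2 * x + 2 - 2 * m) (by omega) (2 * x + 2) (2 * x + 2 * h + 3) (by omega) (by omega)]
    exact hstep (2 * x + 2 * h + 1) _ ⟨x + h, by ring⟩ (by ring)
  have halt₂ : ∀ x, m + h + 1 ≤ x → x < m + 2 * h + 1 → c (2 * x + 2) = !c (2 * x) := by
    intro x hx₁ hx₂
    rw [← hper' (2 * x - 2 * h - 1 - 2 * m) (by omega) (2 * x - 2 * h - 1) (2 * x) (by omega)
        (by omega),
      ← hper' (2 * x + 1 - 2 * h - 2 * m) (by omega) (2 * x - 2 * h + 1) (2 * x + 2) (by omega)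
        (by omega)]
    exact hstep (2 * x - 2 * h - 1) _ ⟨x - h - 1, by omega⟩ (by omega)
  rcases Nat.even_or_odd m with hm | hm
  · rcases Nat.even_or_odd h with hh | hh
    · exact hnoalt (m + h + 1) (by grind) fun y hy₁ hy₂ => halt₂ y (by omega) (by omega)
    · exact hnoalt (m + 1) hm.add_one fun y hy₁ hy₂ => halt₁ y (by omega) (by grind)
  · exact hnoalt m hm fun y hy₁ hy₂ => halt₁ y hy₁ (by omega)

theorem eq_one_or_three_of_overlap (hc : IsPaperfolding c) {n j : ℕ} (hn : 1 ≤ n)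
    (hper : ∀ t ≤ n, c (j + t) = c (j + n + t)) :
    n = 1 ∨ (n = 3 ∧ c (j + 1) = !c j ∧ c (j + 2) = !c j ∧ c (j + 3) = c j) := by
  have hodd : Odd n := hc.odd_of_square hn fun t ht => hper t ht.le
  have hj : Even j := hc.even_of_overlap hodd hper
  have h5 := hc.lt_five_of_overlap hodd hj hper
  obtain rfl | rfl : n = 1 ∨ n = 3 := by obtain ⟨h, rfl⟩ := hodd; omega
  · exact Or.inl rfl
  · have h3 : c (j + 3) = c j := (hper 0 (by omega)).symm
    have h1 : c (j + 3) = !c (j + 1) := hc.apply_add_two_mul hj.add_one odd_one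
    have h2 : c (j + 5) = !c (j + 3) := hc.apply_add_two_mul (by grind) odd_one
    refine Or.inr ⟨rfl, ?_, ?_, h3⟩
    · rw [← h3, h1, Bool.not_not]
    · rw [hper 2 (by omega), h2, h3]

end IsPaperfolding

theorem overlap_of_diff_square {c : ℕ → Bool} {j n : ℕ}
    (hsq : ∀ t < n, (c (j + t + 1)).toNat + (c (j + n + t)).toNat =
      (c (j + t)).toNat + (c (j + n + t + 1)).toNat) :
    ∀ t ≤ n, c (j + t) = c (j + n + t) := by
  have htel : ∀ t ≤ n, (c (j + t)).toNat + (c (j + n)).toNat = (c (j + n + t)).toNat + (c j).toNat := by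
    intro t ht
    induction t with
    | zero => simp only [add_zero]; omega
    | succ t ih =>
      have := hsq t (by omega)
      have := ih (by omega)
      rw [← add_assoc, ← add_assoc]
      omega
  -- `c j`, `c (j + n)`, `c (j + 2n)` are in arithmetic progression in `{0, 1}`
  have hjn : (c (j + n)).toNat = (c j).toNat := by
    have := htel n le_rfl
    have := Bool.toNat_le (c (j + n + n))
    have := Bool.toNat_le (c (j + n))
    have := Bool.toNat_le (c j)
    omega
  intro t ht
  have : (c (j + t)).toNat = (c (j + n + t)).toNat := by have := htel t ht; omega
  revert this
  cases c (j + t) <;> cases c (j + n + t) <;> simp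

section pairEq

variable (f : ℕ → ℤ)

/-- Whether `2k` and `2k + 1` lie in the same run of `P_f`; the `k`-th run then ends at `2k - 1`,
otherwise at `2k`, because the odd-indexed terms of `P_f` alternate. -/
def pairEq (k : ℕ) : Bool := decide (paperSeq f (2 * k) = paperSeq f (2 * k + 1))

theorem pairEq_zero (hf : ∀ n, f n = -1 ∨ f n = 1) : pairEq f 0 = false := by
  rw [pairEq, paperSeq_two_mul_add_one, mul_zero, paperSeq_zero]
  rcases hf 0 with h | h <;> simp [h]

theorem paperSeq_ne_iff_pairEq (hf : ∀ n, f n = -1 ∨ f n = 1) (k : ℕ) :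
    paperSeq f (2 * k + 1) ≠ paperSeq f (2 * k + 2) ↔ pairEq f (k + 1) = true := by
  have hneg : paperSeq f (2 * (k + 1) + 1) = -paperSeq f (2 * k + 1) := by
    rw [paperSeq_two_mul_add_one, paperSeq_two_mul_add_one]
    by_cases hk : Even k <;> simp [hk, parity_simps]
  rw [pairEq, decide_eq_true_iff, hneg, show 2 * k + 2 = 2 * (k + 1) by ring]
  rcases paperSeq_eq_one_or_neg_one f hf (n := 2 * k + 1) (by omega) with h | h <;>
    rcases paperSeq_eq_one_or_neg_one f hf (n := 2 * (k + 1)) (by omega) with h' | h' <;>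
    norm_num [h, h']

theorem isPaperfolding_pairEq (hf : ∀ n, f n = -1 ∨ f n = 1) : IsPaperfolding (pairEq f) := by
  refine ⟨fun a => pairEq f (2 ^ a), fun a b => ?_⟩
  have hodd : ∀ q, Odd q → paperSeq f (2 * (2 ^ a * q) + 1) = paperSeq f (2 * 2 ^ a + 1) := by
    intro q hq
    simp [paperSeq_two_mul_add_one, Nat.even_mul, Nat.not_even_iff_odd.mpr hq]
  simp only [pairEq, paperSeq_two_mul, hodd _ (by grind : Odd (4 * b + 1)),
    hodd _ (by grind : Odd (4 * b + 3)), paperSeq_two_mul_add_one, paperSeq_two_pow,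
    paperSeq_two_pow_mul_four_mul_add_one, paperSeq_two_pow_mul_four_mul_add_three, true_and]
  rcases hf (a + 1) with h | h <;> rcases hf 0 with h0 | h0 <;> split_ifs <;> simp [h, h0]

theorem isRunEnds_paperSeq (hf : ∀ n, f n = -1 ∨ f n = 1) :
    IsRunEnds (paperSeq f) (fun k => 2 * k - (pairEq f k).toNat) := by
  refine ⟨by simp, strictMono_nat_of_lt_succ fun k => ?_, fun m hm => ⟨?_, fun hne => ?_⟩⟩
  · have := Bool.toNat_le (pairEq f k)
    have := Bool.toNat_le (pairEq f (k + 1))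
    omega
  · rintro ⟨k, hk, rfl⟩
    beta_reduce
    cases hb : pairEq f k
    · rw [Bool.toNat_false, Nat.sub_zero]
      simpa [pairEq] using hb
    · obtain ⟨l, rfl⟩ : ∃ l, k = l + 1 := ⟨k - 1, by omega⟩
      rw [Bool.toNat_true, show 2 * (l + 1) - 1 = 2 * l + 1 by omega]
      exact (paperSeq_ne_iff_pairEq f hf l).2 hb
  · obtain ⟨k, rfl | rfl⟩ := Nat.even_or_odd' m
    · have : pairEq f k = false := by simpa [pairEq] using hne
      exact ⟨k, by omega, by simp [this]⟩
    · have := (paperSeq_ne_iff_pairEq f hf k).1 hne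
      exact ⟨k + 1, by omega, by simp only [this, Bool.toNat_true]; omega⟩

end pairEq

theorem runLength_add_pairEq {f p : ℕ → ℤ} {E R : ℕ → ℕ} (hf : ∀ n, f n = -1 ∨ f n = 1)
    (hp : IsLimit f p) (hE : IsRunEnds p E) (hR : ∀ k, R k = E k - E (k - 1)) (k : ℕ) :
    R (k + 1) + (pairEq f (k + 1)).toNat = 2 + (pairEq f k).toNat := by
  have hEc : E = fun k => 2 * k - (pairEq f k).toNat :=
    hE.unique ((isRunEnds_paperSeq f hf).congr fun m hm => (hp.eq_paperSeq hm).symm)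
  -- keeps `2 * k - (pairEq f k).toNat` from truncating at `k = 0`
  have hk : (pairEq f k).toNat ≤ k := by
    rcases k with _ | k
    · simp [pairEq_zero f hf]
    · have := Bool.toNat_le (pairEq f (k + 1)); omega
  have := Bool.toNat_le (pairEq f (k + 1))
  rw [hR, hEc, Nat.add_sub_cancel]
  beta_reduce
  omega

theorem runSeq_squares (f p : ℕ → ℤ) (E : ℕ → ℕ)
    (hf : ∀ n, f n = -1 ∨ f n = 1) (hp : IsLimit f p) (hE : IsRunEnds p E)
    (R : ℕ → ℕ) (hR : ∀ k, R k = E k - E (k - 1)) :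
    ∀ i n : ℕ, 1 ≤ i → 1 ≤ n → (∀ t < n, R (i + t) = R (i + n + t)) →
      (n = 1 ∧ R i = 2) ∨
      (n = 3 ∧ R i = 1 ∧ R (i + 1) = 2 ∧ R (i + 2) = 3) ∨
      (n = 3 ∧ R i = 3 ∧ R (i + 1) = 2 ∧ R (i + 2) = 1) := by
  intro i n hi hn hsq
  have hRc := runLength_add_pairEq hf hp hE hR
  obtain ⟨j, rfl⟩ : ∃ j, i = j + 1 := ⟨i - 1, by omega⟩
  have hper := overlap_of_diff_square (c := pairEq f) (j := j) (n := n) fun t ht => by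
    have := hsq t ht
    rw [show j + 1 + t = j + t + 1 by ring, show j + 1 + n + t = j + n + t + 1 by ring] at this
    have := hRc (j + t)
    have := hRc (j + n + t)
    omega
  rcases (isPaperfolding_pairEq f hf).eq_one_or_three_of_overlap hn hper with
    rfl | ⟨rfl, h1, h2, h3⟩
  · have r1 := hRc j
    rw [← show pairEq f j = pairEq f (j + 1) from hper 0 (by omega)] at r1
    exact Or.inl ⟨rfl, by omega⟩
  · have r1 := hRc j
    have r2 : R (j + 1 + 1) + (pairEq f (j + 2)).toNat = 2 + (pairEq f (j + 1)).toNat := hRc (j + 1)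
    have r3 : R (j + 1 + 2) + (pairEq f (j + 3)).toNat = 2 + (pairEq f (j + 2)).toNat := hRc (j + 2)
    cases hc : pairEq f j
    · simp only [h1, h2, h3, hc, Bool.not_false, Bool.toNat_true, Bool.toNat_false] at r1 r2 r3
      exact Or.inr (Or.inl ⟨rfl, by omega, by omega, by omega⟩)
    · simp only [h1, h2, h3, hc, Bool.not_true, Bool.toNat_true, Bool.toNat_false] at r1 r2 r3
      exact Or.inr (Or.inr ⟨rfl, by omega, by omega, by omega⟩)
end

section
/- If a square zz occurs in the run-length sequence of an infinite paperfolding sequence, then |z| = 1 or |z| = 3. -/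
/-!
For `n = 2 ^ j * (2u + 1)` the paperfolding sequence is `p n = f j * (-1) ^ u`. Since
`p (2k + 3) = -p (2k + 1)`, exactly one of the positions `2k + 1`, `2k + 2` ends a run, so
`E (k + 1) ∈ {2k + 1, 2k + 2}`, decided by the sign of `p (2k + 1) * p (2k + 2)`, which is
`f 0 * (-1) ^ k * q (k + 1)` for the paperfolding sequence `q k = p (2k)`. A square of order `n`
in the run lengths forces `E (k + n) = E k + 2n` on `n + 1` consecutive indices, that is
`q (k + n) = (-1) ^ n * q k` there. For even `n` this fails at an `x` divisible by exactly
`2 ^ (ν₂ n - 1)`, where the closed form gives `q (x + n) = -q x`. For odd `n` the shift carries the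
sign changes `q (y + 2) = -q y` at odd `y` over to even positions; once `n ≥ 5` this yields
`q (y + 4) = q y` for some `y ≡ 2 [MOD 4]`, whereas the closed form gives `q (y + 4) = -q y`.
-/

theorem Nat.exists_mod_eq_of_lt (b : ℕ) {d r : ℕ} (hr : r < d) :
    ∃ x, b < x ∧ x ≤ b + d ∧ x % d = r := by
  have hb := Nat.div_add_mod b d
  have hlt := Nat.mod_lt b (by omega : 0 < d)
  have hmod : ∀ c, (d * c + r) % d = r := fun c => by rw [Nat.mul_add_mod, Nat.mod_eq_of_lt hr]
  by_cases h : b % d < r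
  · exact ⟨d * (b / d) + r, by omega, by omega, hmod _⟩
  · exact ⟨d * (b / d + 1) + r, by rw [mul_add]; omega, by rw [mul_add]; omega, hmod _⟩

/-- The closed form of the paperfolding sequence: `f j * (-1) ^ u` at `n = 2 ^ j * (2u + 1)`. -/
def pfSeq (f : ℕ → ℤ) (n : ℕ) : ℤ :=
  f (padicValNat 2 n) * (-1) ^ (n / 2 ^ (padicValNat 2 n + 1))

namespace pfSeq

variable (f : ℕ → ℤ)

theorem two_pow_mul_odd (j u : ℕ) : pfSeq f (2 ^ j * (2 * u + 1)) = f j * (-1) ^ u := by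
  have hv : padicValNat 2 (2 ^ j * (2 * u + 1)) = j := by
    rw [padicValNat.mul (by positivity) (by omega), padicValNat.prime_pow,
      padicValNat.eq_zero_of_not_dvd (by omega), add_zero]
  have hu : 2 ^ j * (2 * u + 1) / 2 ^ (j + 1) = u := by
    rw [pow_succ, Nat.mul_div_mul_left _ _ (by positivity)]
    omega
  rw [pfSeq, hv, hu]

theorem add_two_pow_mul {j k : ℕ} (hk : k % 2 ^ (j + 1) = 2 ^ j) (t : ℕ) :
    pfSeq f (k + 2 ^ (j + 1) * t) = (-1) ^ t * pfSeq f k := by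
  obtain ⟨u, hku⟩ : ∃ u, k = 2 ^ j * (2 * u + 1) := by
    have h := Nat.div_add_mod k (2 ^ (j + 1))
    rw [hk, pow_succ] at h
    exact ⟨k / (2 ^ j * 2), by linarith⟩
  have hkt : k + 2 ^ (j + 1) * t = 2 ^ j * (2 * (u + t) + 1) := by rw [hku, pow_succ]; ring
  rw [hkt, hku, two_pow_mul_odd, two_pow_mul_odd, pow_add]
  ring

theorem add_two_of_odd {k : ℕ} (hk : k % 2 = 1) : pfSeq f (k + 2) = -pfSeq f k := by
  simpa using add_two_pow_mul f (j := 0) (by simpa using hk) 1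

theorem add_four_of_mod_four_eq_two {k : ℕ} (hk : k % 4 = 2) :
    pfSeq f (k + 4) = -pfSeq f k := by
  simpa using add_two_pow_mul f (j := 1) (by simpa using hk) 1

theorem odd (u : ℕ) : pfSeq f (2 * u + 1) = f 0 * (-1) ^ u := by
  simpa using two_pow_mul_odd f 0 u

theorem two_pow (m : ℕ) : pfSeq f (2 ^ m) = f m := by
  simpa using two_pow_mul_odd f m 0

theorem two_mul {k : ℕ} (hk : k ≠ 0) : pfSeq f (2 * k) = pfSeq (fun j => f (j + 1)) k := by
  obtain ⟨j, _, ⟨u, rfl⟩, rfl⟩ := Nat.exists_eq_two_pow_mul_odd hk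
  rw [← mul_assoc, ← pow_succ', two_pow_mul_odd, two_pow_mul_odd]

theorem two_pow_add {m r : ℕ} (hr : 1 ≤ r) (hrm : r < 2 ^ m) :
    pfSeq f (2 ^ m + r) = -pfSeq f (2 ^ m - r) := by
  obtain ⟨j, _, ⟨u, rfl⟩, rfl⟩ := Nat.exists_eq_two_pow_mul_odd (by omega : r ≠ 0)
  have hjm : j < m := (Nat.pow_lt_pow_iff_right (by norm_num)).mp
    (lt_of_le_of_lt (Nat.le_mul_of_pos_right _ (by omega)) hrm)
  obtain ⟨c, rfl⟩ := Nat.exists_eq_add_of_lt hjm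
  have hm : 2 ^ (j + c + 1) = 2 ^ j * (2 * 2 ^ c) := by rw [pow_add, pow_add]; ring
  rw [hm] at hrm ⊢
  obtain ⟨d, hd⟩ : ∃ d, 2 ^ c = u + 1 + d :=
    Nat.exists_eq_add_of_le (by have := Nat.lt_of_mul_lt_mul_left hrm; omega)
  have hsum : 2 ^ j * (2 * (u + 1 + d)) + 2 ^ j * (2 * u + 1) =
      2 ^ j * (2 * (2 * u + 1 + d) + 1) := by ring
  have hdiff : 2 ^ j * (2 * (u + 1 + d)) - 2 ^ j * (2 * u + 1) = 2 ^ j * (2 * d + 1) := by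
    rw [Nat.sub_eq_of_eq_add]; ring
  rw [hd, hsum, hdiff, two_pow_mul_odd, two_pow_mul_odd, pow_add, pow_add, pow_mul]
  ring

theorem eq_one_or_neg_one (hf : ∀ n, f n = -1 ∨ f n = 1) (n : ℕ) :
    pfSeq f n = 1 ∨ pfSeq f n = -1 := by
  unfold pfSeq
  rcases hf (padicValNat 2 n) with h | h <;>
    rcases neg_one_pow_eq_or ℤ (n / 2 ^ (padicValNat 2 n + 1)) with h' | h' <;> simp [h, h']

theorem ne_zero (hf : ∀ j, f j ≠ 0) (k : ℕ) : pfSeq f k ≠ 0 :=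
  mul_ne_zero (hf _) (pow_ne_zero _ (by norm_num))

end pfSeq

section PaperWords

variable (f : ℕ → ℤ)

theorem paper_range_succ (m : ℕ) :
    paper ((List.range (m + 1)).map f) =
      paper ((List.range m).map f) ++ f m :: (paper ((List.range m).map f)).reverse.map (-·) := by
  simp [paper, foldAux, List.range_succ]

theorem length_paper_range (m : ℕ) : (paper ((List.range m).map f)).length = 2 ^ m - 1 := by
  induction m with
  | zero => simp [paper, foldAux]
  | succ m ih =>
    rw [paper_range_succ]
    simp only [List.length_append, List.length_cons, List.length_map, List.length_reverse, ih]
    have := Nat.one_le_two_pow (n := m)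
    rw [pow_succ]
    omega

theorem getD_paper_range (m : ℕ) {k : ℕ} (hk : k < 2 ^ m - 1) :
    (paper ((List.range m).map f)).getD k 0 = pfSeq f (k + 1) := by
  induction m generalizing k with
  | zero => simp at hk
  | succ m ih =>
    have hlen := length_paper_range f m
    have := Nat.one_le_two_pow (n := m)
    rw [pow_succ] at hk
    rw [paper_range_succ]
    rcases lt_trichotomy k (2 ^ m - 1) with hlt | rfl | hgt
    · rw [List.getD_append _ _ _ _ (by omega), ih hlt]
    · rw [List.getD_append_right _ _ _ _ hlen.le, hlen, Nat.sub_self, List.getD_cons_zero,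
        Nat.sub_add_cancel this, pfSeq.two_pow]
    · obtain ⟨t, rfl⟩ : ∃ t, k = 2 ^ m + t := ⟨k - 2 ^ m, by omega⟩
      rw [List.getD_append_right _ _ _ _ (by omega), hlen,
        show 2 ^ m + t - (2 ^ m - 1) = t + 1 by omega, List.getD_cons_succ,
        List.getD_eq_getElem _ _ (by simp [hlen]; omega), List.getElem_map,
        List.getElem_reverse, ← List.getD_eq_getElem _ 0, ih (by omega),
        add_assoc, pfSeq.two_pow_add f (by omega) (by omega)]
      congr 2
      omega

end PaperWords

theorem IsLimit.eq_pfSeq {f p : ℕ → ℤ} (hp : IsLimit f p) {k : ℕ} (hk : 1 ≤ k) :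
    p k = pfSeq f k := by
  have hlt : k - 1 < 2 ^ k - 1 := by have := Nat.lt_two_pow_self (n := k); omega
  have h := hp k (k - 1) (by rwa [length_paper_range])
  rwa [Nat.sub_add_cancel hk, getD_paper_range f k hlt, Nat.sub_add_cancel hk] at h

def OneRunEndPerPair (p : ℕ → ℤ) : Prop :=
  ∀ k, p (2 * k + 1) ≠ p (2 * k + 2) ↔ p (2 * k + 2) = p (2 * k + 3)

namespace IsRunEnds

variable {p : ℕ → ℤ} {E : ℕ → ℕ}

theorem two_mul_add_one_le (hE : IsRunEnds p E) (hpair : OneRunEndPerPair p) (k : ℕ) :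
    2 * k + 1 ≤ E (k + 1) := by
  obtain ⟨h0, hmono, hends⟩ := hE
  induction k with
  | zero => show 1 ≤ E 1; have := hmono (show 0 < 1 by omega); omega
  | succ k ih =>
    show 2 * (k + 1) + 1 ≤ E (k + 2)
    have hlt := hmono (show k + 1 < k + 2 by omega)
    by_contra! hle
    have h₁ : p (2 * k + 1) ≠ p (2 * k + 2) := (hends _ (by omega)).mp ⟨k + 1, by omega, by omega⟩
    have h₂ : p (2 * k + 2) ≠ p (2 * k + 3) := (hends _ (by omega)).mp ⟨k + 2, by omega, by omega⟩
    exact h₂ ((hpair k).mp h₁)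

theorem le_two_mul (hE : IsRunEnds p E) (hpair : OneRunEndPerPair p) (k : ℕ) : E k ≤ 2 * k := by
  obtain ⟨h0, hmono, hends⟩ := hE
  induction k with
  | zero => omega
  | succ k ih =>
    obtain ⟨j, hj, hEj⟩ : ∃ j, 1 ≤ j ∧ 2 * k + 1 ≤ E j ∧ E j ≤ 2 * k + 2 := by
      by_cases h : p (2 * k + 1) ≠ p (2 * k + 2)
      · obtain ⟨j, hj, hEj⟩ := (hends _ (by omega)).mpr h
        exact ⟨j, hj, by omega⟩
      · obtain ⟨j, hj, hEj⟩ := (hends (2 * k + 2) (by omega)).mpr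
          fun h' => h ((hpair k).mpr h')
        exact ⟨j, hj, by omega⟩
    have hkj : k < j := hmono.lt_iff_lt.mp (by omega)
    have : E (k + 1) ≤ E j := hmono.monotone hkj
    omega

theorem two_mul_le_add_one (hE : IsRunEnds p E) (hpair : OneRunEndPerPair p) (k : ℕ) :
    2 * k ≤ E k + 1 := by
  cases k with
  | zero => omega
  | succ k => have := hE.two_mul_add_one_le hpair k; omega

theorem succ_eq_iff (hE : IsRunEnds p E) (hpair : OneRunEndPerPair p) (k : ℕ) :
    E (k + 1) = 2 * k + 1 ↔ p (2 * k + 1) ≠ p (2 * k + 2) := by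
  refine ⟨fun h => (hE.2.2 _ (by omega)).mp ⟨k + 1, by omega, h⟩, fun h => ?_⟩
  obtain ⟨j, hj, hEj⟩ := (hE.2.2 _ (by omega)).mpr h
  have hkj : k < j := hE.2.1.lt_iff_lt.mp (by have := hE.le_two_mul hpair k; omega)
  have hjk : j ≤ k + 1 := hE.2.1.le_iff_le.mp (by have := hE.two_mul_add_one_le hpair k; omega)
  rwa [show k + 1 = j by omega]

end IsRunEnds

section RunEndsOfPaperfolding

variable {f p : ℕ → ℤ} {E : ℕ → ℕ}

theorem IsLimit.oneRunEndPerPair (hf : ∀ n, f n = -1 ∨ f n = 1) (hp : IsLimit f p) :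
    OneRunEndPerPair p := by
  intro k
  have h3 : p (2 * k + 3) = -p (2 * k + 1) := by
    rw [hp.eq_pfSeq (by omega), hp.eq_pfSeq (by omega), ← pfSeq.add_two_of_odd f (by omega)]
  rw [h3, hp.eq_pfSeq (by omega), hp.eq_pfSeq (by omega)]
  rcases pfSeq.eq_one_or_neg_one f hf (2 * k + 1) with h1 | h1 <;>
    rcases pfSeq.eq_one_or_neg_one f hf (2 * k + 2) with h2 | h2 <;> simp [h1, h2]

/-- The factors `f 0 * (-1) ^ k` and `pfSeq _ (k + 1)` are `p (2k + 1)` and `p (2k + 2)`. -/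
theorem IsRunEnds.two_mul_succ_eq (hf : ∀ n, f n = -1 ∨ f n = 1) (hp : IsLimit f p)
    (hE : IsRunEnds p E) (k : ℕ) :
    2 * (E (k + 1) : ℤ) = 4 * k + 3 + f 0 * (-1) ^ k * pfSeq (fun j => f (j + 1)) (k + 1) := by
  have hpair := hp.oneRunEndPerPair hf
  have hiff := hE.succ_eq_iff hpair k
  have hlo := hE.two_mul_add_one_le hpair k
  have hhi := hE.le_two_mul hpair (k + 1)
  rw [hp.eq_pfSeq (by omega), hp.eq_pfSeq (by omega), pfSeq.odd,
    show 2 * k + 2 = 2 * (k + 1) by ring, pfSeq.two_mul f (by omega)] at hiff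
  have hx : f 0 * (-1) ^ k = 1 ∨ f 0 * (-1) ^ k = -1 := by
    rcases hf 0 with h | h <;> rcases neg_one_pow_eq_or ℤ k with h' | h' <;> simp [h, h']
  rcases hx with hx | hx <;>
    rcases pfSeq.eq_one_or_neg_one _ (fun j => hf (j + 1)) (k + 1) with hy | hy <;>
    simp only [hx, hy] at hiff ⊢ <;> norm_num at hiff <;> omega

theorem IsRunEnds.pfSeq_succ_add (hf : ∀ n, f n = -1 ∨ f n = 1) (hp : IsLimit f p)
    (hE : IsRunEnds p E) {k n : ℕ} (h : E (k + 1 + n) = E (k + 1) + 2 * n) :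
    pfSeq (fun j => f (j + 1)) (k + 1 + n) = (-1) ^ n * pfSeq (fun j => f (j + 1)) (k + 1) := by
  have h₁ := hE.two_mul_succ_eq hf hp k
  have h₂ := hE.two_mul_succ_eq hf hp (k + n)
  rw [show k + n + 1 = k + 1 + n by ring, h] at h₂
  push_cast at h₂
  have hne : f 0 * (-1) ^ k ≠ 0 := mul_ne_zero (by rcases hf 0 with h | h <;> simp [h]) (by simp)
  have hcancel : (-1) ^ n * pfSeq (fun j => f (j + 1)) (k + 1 + n) =
      pfSeq (fun j => f (j + 1)) (k + 1) :=
    mul_left_cancel₀ hne (by rw [pow_add] at h₂; linear_combination h₁ - h₂)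
  rw [← hcancel, ← mul_assoc, ← mul_pow]
  norm_num

end RunEndsOfPaperfolding

theorem eq_add_two_mul_of_increments_eq {E : ℕ → ℕ} (hE : ∀ k, E k ≤ 2 * k ∧ 2 * k ≤ E k + 1)
    {a n : ℕ} (hincr : ∀ t < n, E (a + t + 1) + E (a + n + t) = E (a + n + t + 1) + E (a + t))
    {k : ℕ} (hak : a ≤ k) (hkn : k ≤ a + n) : E (k + n) = E k + 2 * n := by
  have htel : ∀ t ≤ n, E (a + t) + E (a + n) = E (a + n + t) + E a := by
    intro t
    induction t with
    | zero => simp [add_comm]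
    | succ t ih =>
      intro ht
      have := hincr t (by omega)
      have := ih (by omega)
      rw [← add_assoc, ← add_assoc]
      omega
  obtain ⟨t, rfl⟩ : ∃ t, k = a + t := ⟨k - a, by omega⟩
  -- In terms of `e k = 2k - E k ∈ {0, 1}`, `htel n` reads `2 e (a + n) = e a + e (a + 2n)`,
  -- forcing `e a = e (a + n)`, and then `htel t` gives `e (a + t) = e (a + n + t)`.
  have := htel t (by omega)
  have := htel n le_rfl
  have := hE a
  have := hE (a + n)
  have := hE (a + n + n)
  have := hE (a + t)
  have := hE (a + n + t)
  rw [show a + t + n = a + n + t by ring]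
  omega

/-- The window is `[max 1 b, b + n]`: `n + 1` indices, or only `n` when `b = 0`. -/
def ShiftScalesOn (q : ℕ → ℤ) (n : ℕ) (c : ℤ) (b : ℕ) : Prop :=
  ∀ k, 1 ≤ k → b ≤ k → k ≤ b + n → q (k + n) = c * q k

namespace pfSeq

variable {g : ℕ → ℤ} {b n : ℕ}

theorem not_shiftScalesOn_one_of_even (hg : ∀ j, g j ≠ 0) (hn : n ≠ 0) (heven : n % 2 = 0) :
    ¬ ShiftScalesOn (pfSeq g) n 1 b := by
  intro hper
  obtain ⟨J, o, ho, rfl⟩ := Nat.exists_eq_two_pow_mul_odd hn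
  obtain ⟨j, rfl⟩ : ∃ j, J = j + 1 := ⟨J - 1, by
    rcases Nat.eq_zero_or_pos J with rfl | hJ
    · rw [pow_zero, one_mul] at heven; exact absurd ho (by simpa [Nat.odd_iff] using heven)
    · omega⟩
  obtain ⟨x, hbx, hxb, hx⟩ := Nat.exists_mod_eq_of_lt b (Nat.pow_lt_pow_succ (le_refl 2) (n := j))
  have hle : 2 ^ (j + 1) ≤ 2 ^ (j + 1) * o := Nat.le_mul_of_pos_right _ ho.pos
  have h := hper x (by omega) (by omega) (by omega)
  rw [add_two_pow_mul g hx, ho.neg_one_pow, one_mul, neg_one_mul, neg_eq_iff_add_eq_zero] at h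
  exact ne_zero g hg x (add_self_eq_zero.mp h)

theorem add_two_of_shiftScalesOn_neg_one (hanti : ShiftScalesOn (pfSeq g) n (-1) b)
    (hn : n % 2 = 1) {k : ℕ} (hk : 1 ≤ k) (hbk : b ≤ k) (hkn : k + 2 ≤ b + n) :
    pfSeq g (k + 2) = -pfSeq g k ∧ pfSeq g (k + n + 2) = -pfSeq g (k + n) := by
  have h₀ := hanti k hk hbk (by omega)
  have h₂ := hanti (k + 2) (by omega) (by omega) hkn
  rw [show k + 2 + n = k + n + 2 by ring] at h₂
  rcases Nat.mod_two_eq_zero_or_one k with hk2 | hk2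
  · have h := add_two_of_odd g (k := k + n) (by omega)
    exact ⟨by linear_combination h₂ - h + h₀, h⟩
  · have h := add_two_of_odd g hk2
    exact ⟨h, by linear_combination h₂ - h + h₀⟩

theorem mod_four_ne_two_of_shiftScalesOn_neg_one (hg : ∀ j, g j ≠ 0)
    (hanti : ShiftScalesOn (pfSeq g) n (-1) b) (hn : n % 2 = 1) {x : ℕ}
    (hx : 1 ≤ x) (hbx : b ≤ x) (hxn : x + 4 ≤ b + n) : x % 4 ≠ 2 ∧ (x + n) % 4 ≠ 2 := by
  obtain ⟨h₁, h₁'⟩ := add_two_of_shiftScalesOn_neg_one hanti hn hx hbx (by omega)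
  obtain ⟨h₂, h₂'⟩ :=
    add_two_of_shiftScalesOn_neg_one hanti hn (k := x + 2) (by omega) (by omega) hxn
  have hne : ∀ y, pfSeq g (y + 4) = pfSeq g y → y % 4 ≠ 2 := fun y hy hy4 => by
    rw [add_four_of_mod_four_eq_two g hy4, neg_eq_iff_add_eq_zero] at hy
    exact ne_zero g hg y (add_self_eq_zero.mp hy)
  refine ⟨hne x ?_, hne (x + n) ?_⟩
  · rw [show x + 4 = x + 2 + 2 by ring, h₂, h₁, neg_neg]
  · rw [show x + n + 4 = x + 2 + n + 2 by ring, h₂', show x + 2 + n = x + n + 2 by ring, h₁',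
      neg_neg]

theorem even_of_shiftScalesOn_neg_one (hg : ∀ j, g j ≠ 0)
    (hanti : ShiftScalesOn (pfSeq g) n (-1) b) (hn : n % 2 = 1) (hb : 1 ≤ b) : b % 2 = 0 := by
  by_contra hodd
  have h₁ := hanti b hb le_rfl (by omega)
  have h₂ := hanti (b + n) (by omega) (by omega) le_rfl
  have h := add_two_pow_mul g (j := 0) (k := b) (by simpa using hodd) n
  rw [pow_succ, pow_zero, one_mul, show b + 2 * n = b + n + n by ring, h₂, h₁,
    Odd.neg_one_pow (Nat.odd_iff.mpr hn), neg_one_mul, neg_one_mul, neg_neg,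
    eq_neg_iff_add_eq_zero] at h
  exact ne_zero g hg b (add_self_eq_zero.mp h)

theorem lt_five_of_shiftScalesOn_neg_one (hg : ∀ j, g j ≠ 0)
    (hanti : ShiftScalesOn (pfSeq g) n (-1) b) (hn : n % 2 = 1) : n < 5 := by
  by_contra! h5
  have hmod := fun x => mod_four_ne_two_of_shiftScalesOn_neg_one hg hanti hn (x := x)
  have heven := fun hb => even_of_shiftScalesOn_neg_one hg hanti hn hb
  -- For `n ≥ 7` one of `x`, `x + n` is `2 mod 4` for some `x ∈ {b, b + 1, b + 2}` (or `x = 2` if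
  -- `b = 0`); for `n = 5` the start `b` is even and `x ∈ {b, b + 1}` (or `x = 1`) suffices.
  have := hmod 1; have := hmod 2; have := hmod b; have := hmod (b + 1); have := hmod (b + 2)
  omega

theorem eq_one_or_three_of_shiftScalesOn (hg : ∀ j, g j ≠ 0) (hn : 1 ≤ n)
    (h : ShiftScalesOn (pfSeq g) n ((-1) ^ n) b) : n = 1 ∨ n = 3 := by
  rcases Nat.mod_two_eq_zero_or_one n with hn2 | hn2
  · rw [Even.neg_one_pow (Nat.even_iff.mpr hn2)] at h
    exact (not_shiftScalesOn_one_of_even hg (by omega) hn2 h).elim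
  · rw [Odd.neg_one_pow (Nat.odd_iff.mpr hn2)] at h
    have := lt_five_of_shiftScalesOn_neg_one hg h hn2
    omega

end pfSeq

theorem runSeq_square_orders (f p : ℕ → ℤ) (E : ℕ → ℕ)
    (hf : ∀ n, f n = -1 ∨ f n = 1) (hp : IsLimit f p) (hE : IsRunEnds p E)
    (R : ℕ → ℕ) (hR : ∀ k, R k = E k - E (k - 1)) :
    ∀ i n : ℕ, 1 ≤ i → 1 ≤ n → (∀ t < n, R (i + t) = R (i + n + t)) →
      n = 1 ∨ n = 3 := by
  intro i n hi hn hsq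
  obtain ⟨a, rfl⟩ : ∃ a, i = a + 1 := ⟨i - 1, by omega⟩
  have hpair := hp.oneRunEndPerPair hf
  have hbounds : ∀ k, E k ≤ 2 * k ∧ 2 * k ≤ E k + 1 := fun k =>
    ⟨hE.le_two_mul hpair k, hE.two_mul_le_add_one hpair k⟩
  have hincr : ∀ t < n, E (a + t + 1) + E (a + n + t) = E (a + n + t + 1) + E (a + t) := by
    intro t ht
    have h := hsq t ht
    rw [hR, hR, show a + 1 + t = a + t + 1 by ring, show a + 1 + n + t = a + n + t + 1 by ring,
      Nat.add_sub_cancel, Nat.add_sub_cancel] at h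
    have := hbounds (a + t); have := hbounds (a + t + 1)
    have := hbounds (a + n + t); have := hbounds (a + n + t + 1)
    omega
  refine pfSeq.eq_one_or_three_of_shiftScalesOn (g := fun j => f (j + 1)) (b := a)
    (fun j => by rcases hf (j + 1) with h | h <;> simp [h]) hn fun k hk hak hkn => ?_
  obtain ⟨k, rfl⟩ : ∃ k', k = k' + 1 := ⟨k - 1, by omega⟩
  exact hE.pfSeq_succ_add hf hp (eq_add_two_mul_of_increments_eq hbounds hincr hak hkn)
end

section
/- For every infinite paperfolding sequence, the number of distinct factors of length n occurring in its run-length sequence equals 4n + 4 for all n ≥ 6. -/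
namespace RunSeqPf


/-- values at position 2^k(2j+1) -/
def PF (g q : ℕ → ℤ) : Prop := ∀ k j, q (2^k * (2*j+1)) = g k * (-1)^j

def PM1 (g : ℕ → ℤ) : Prop := ∀ k, g k = -1 ∨ g k = 1

def Win (q : ℕ → ℤ) (m ε : ℕ) : Set (Fin m → ℤ) :=
  {w | ∃ j, 1 ≤ j ∧ j % 2 = ε ∧ ∀ t : Fin m, w t = q (j + t.val)}

lemma two_adic : ∀ m, 1 ≤ m → ∃ k j, m = 2^k * (2*j+1) := by
  intro m
  induction m using Nat.strong_induction_on with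
  | _ m IH =>
    intro hm
    rcases Nat.even_or_odd m with he | ho
    · obtain ⟨m', rfl⟩ := he
      obtain ⟨k, j, hkj⟩ := IH m' (by omega) (by omega)
      refine ⟨k+1, j, ?_⟩
      rw [hkj, pow_succ]; ring
    · obtain ⟨j, rfl⟩ := ho
      exact ⟨0, j, by ring⟩

lemma pf_shift {g q : ℕ → ℤ} (h : PF g q) : PF (fun k => g (k+1)) (fun n => q (2*n)) := by
  intro k j
  have := h (k+1) j
  simpa [pow_succ, mul_comm, mul_assoc, mul_left_comm] using this

lemma pf_odd {g q : ℕ → ℤ} (h : PF g q) (b : ℕ) : q (2*b+1) = g 0 * (-1)^b := by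
  simpa using h 0 b

lemma pf_alt {g q : ℕ → ℤ} (h : PF g q) (b : ℕ) : q (2*b+3) = - q (2*b+1) := by
  have h1 := pf_odd h b
  have h2 := pf_odd h (b+1)
  rw [show 2*(b+1)+1 = 2*b+3 by ring] at h2
  rw [h1, h2, pow_succ]; ring

lemma pf_val {g q : ℕ → ℤ} (h : PF g q) (hg : PM1 g) :
    ∀ m, 1 ≤ m → q m = -1 ∨ q m = 1 := by
  intro m hm
  obtain ⟨k, j, rfl⟩ := two_adic m hm
  rw [h k j]
  rcases hg k with h1 | h1 <;>
    rcases Nat.even_or_odd j with he | ho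
  · simp [h1, he.neg_one_pow]
  · simp [h1, ho.neg_one_pow]
  · simp [h1, he.neg_one_pow]
  · simp [h1, ho.neg_one_pow]

lemma win_finite {g q : ℕ → ℤ} (h : PF g q) (hg : PM1 g) (m ε : ℕ) :
    (Win q m ε).Finite := by
  have hsub : Win q m ε ⊆ Set.univ.pi (fun _ : Fin m => ({-1, 1} : Set ℤ)) := by
    rintro w ⟨j, hj, -, hw⟩ t -
    have := pf_val h hg (j + t.val) (by omega)
    rw [hw t]
    simpa using this
  exact Set.Finite.subset (Set.Finite.pi (fun _ => (Set.toFinite _))) hsub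

/-- interleave for odd starting positions: even offsets alternating, odd offsets from `u`. -/
def embO (m : ℕ) (s : ℤ) (u : Fin (m/2) → ℤ) : Fin m → ℤ :=
  fun t => if h : t.val % 2 = 0 then s * (-1)^(t.val/2) else u ⟨t.val/2, by omega⟩

/-- interleave for even starting positions. -/
def embE (m : ℕ) (s : ℤ) (u : Fin ((m+1)/2) → ℤ) : Fin m → ℤ :=
  fun t => if h : t.val % 2 = 0 then u ⟨t.val/2, by omega⟩ else s * (-1)^(t.val/2)

lemma embO_even (m : ℕ) (s : ℤ) (u : Fin (m/2) → ℤ) (r : ℕ) (h : 2*r < m) :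
    embO m s u ⟨2*r, h⟩ = s * (-1)^r := by
  simp [embO, Nat.mul_div_cancel_left r (by norm_num : 0 < 2), Nat.mul_mod_right]

lemma embO_odd (m : ℕ) (s : ℤ) (u : Fin (m/2) → ℤ) (r : ℕ) (h : 2*r+1 < m) :
    embO m s u ⟨2*r+1, h⟩ = u ⟨r, by omega⟩ := by
  have h2 : (2*r+1) % 2 = 1 := by omega
  have h3 : (2*r+1) / 2 = r := by omega
  simp only [embO, h2]
  simp [h3]

lemma embE_even (m : ℕ) (s : ℤ) (u : Fin ((m+1)/2) → ℤ) (r : ℕ) (h : 2*r < m) :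
    embE m s u ⟨2*r, h⟩ = u ⟨r, by omega⟩ := by
  have h3 : (2*r) / 2 = r := by omega
  simp only [embE, Nat.mul_mod_right]
  simp [h3]

lemma embE_odd (m : ℕ) (s : ℤ) (u : Fin ((m+1)/2) → ℤ) (r : ℕ) (h : 2*r+1 < m) :
    embE m s u ⟨2*r+1, h⟩ = s * (-1)^r := by
  have h2 : (2*r+1) % 2 = 1 := by omega
  have h3 : (2*r+1) / 2 = r := by omega
  simp only [embE, h2]
  simp [h3]

lemma neg_one_pow_add_even (c r : ℕ) (hc : c % 2 = 0) : ((-1:ℤ))^(c+r) = (-1)^r := by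
  rw [pow_add, Even.neg_one_pow ⟨c/2, by omega⟩, one_mul]

lemma neg_one_pow_add_odd (c r : ℕ) (hc : c % 2 = 1) : ((-1:ℤ))^(c+r) = -((-1)^r) := by
  rw [pow_add, Odd.neg_one_pow ⟨c/2, by omega⟩]; ring

lemma win1_eq {g q : ℕ → ℤ} (hq : PF g q) (m : ℕ) :
    Win q m 1 = embO m (g 0) '' Win (fun n => q (2*n)) (m/2) 1 ∪
      embO m (-(g 0)) '' Win (fun n => q (2*n)) (m/2) 0 := by
  ext w
  constructor
  · rintro ⟨j, hj1, hj2, hw⟩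
    obtain ⟨c, rfl⟩ : ∃ c, j = 2*c+1 := ⟨j/2, by omega⟩
    set u : Fin (m/2) → ℤ := fun r => w ⟨2*r.val+1, by have := r.isLt; omega⟩ with hu
    have hu_occ : ∀ r : Fin (m/2), u r = q (2*(c+1+r.val)) := by
      intro r
      rw [hu]
      simp only []
      rw [hw ⟨2*r.val+1, by omega⟩]
      congr 1
      simp; ring
    have hweq : ∀ s : ℤ, (∀ (r : ℕ) (hr : 2*r < m), w ⟨2*r, hr⟩ = s * (-1)^r) →
        w = embO m s u := by
      intro s hs
      funext t
      rcases Nat.even_or_odd t.val with ⟨r, hr⟩ | ⟨r, hr⟩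
      · have ht : (t : Fin m) = ⟨2*r, by omega⟩ := by apply Fin.ext; simp; omega
        rw [ht, embO_even m s u r (by omega)]
        exact hs r (by omega)
      · have ht : (t : Fin m) = ⟨2*r+1, by omega⟩ := by apply Fin.ext; simp; omega
        rw [ht, embO_odd m s u r (by omega)]
    rcases Nat.even_or_odd c with hc | hc
    · obtain ⟨a, rfl⟩ : ∃ a, c = 2*a := ⟨c/2, (by rcases hc with ⟨x,hx⟩; omega)⟩
      left
      refine ⟨u, ⟨2*a+1, by omega, by omega, hu_occ⟩, ?_⟩
      symm
      apply hweq
      intro r hr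
      rw [hw ⟨2*r, hr⟩]
      simp only []
      rw [show 2*(2*a)+1+2*r = 2*(2*a+r)+1 by ring, pf_odd hq,
        neg_one_pow_add_even (2*a) r (by omega)]
    · obtain ⟨a, rfl⟩ : ∃ a, c = 2*a+1 := ⟨c/2, (by rcases hc with ⟨x,hx⟩; omega)⟩
      right
      refine ⟨u, ⟨(2*a+1)+1, by omega, by omega, hu_occ⟩, ?_⟩
      symm
      apply hweq
      intro r hr
      rw [hw ⟨2*r, hr⟩]
      simp only []
      rw [show 2*(2*a+1)+1+2*r = 2*((2*a+1)+r)+1 by ring, pf_odd hq,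
        neg_one_pow_add_odd (2*a+1) r (by omega)]
      ring
  · rintro (⟨u, ⟨j₁, hj₁, hpar, hu⟩, rfl⟩ | ⟨u, ⟨j₁, hj₁, hpar, hu⟩, rfl⟩)
    · -- u at odd j₁ = 2a+1, start j = 4a+1
      obtain ⟨a, rfl⟩ : ∃ a, j₁ = 2*a+1 := ⟨j₁/2, by omega⟩
      refine ⟨4*a+1, by omega, by omega, ?_⟩
      intro t
      rcases Nat.even_or_odd t.val with ⟨r, hr⟩ | ⟨r, hr⟩
      · have ht : (t : Fin m) = ⟨2*r, by omega⟩ := by apply Fin.ext; simp; omega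
        rw [ht, embO_even m _ u r (by omega),
          show 4*a+1+2*r = 2*(2*a+r)+1 by ring, pf_odd hq,
          neg_one_pow_add_even (2*a) r (by omega)]
      · have ht : (t : Fin m) = ⟨2*r+1, by omega⟩ := by apply Fin.ext; simp; omega
        rw [ht, embO_odd m _ u r (by omega),
          show 4*a+1+(2*r+1) = 2*((2*a+1)+r) by ring]
        exact hu ⟨r, by omega⟩
    · obtain ⟨a, rfl⟩ : ∃ a, j₁ = 2*a+2 := ⟨(j₁-2)/2, by omega⟩
      refine ⟨4*a+3, by omega, by omega, ?_⟩
      intro t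
      rcases Nat.even_or_odd t.val with ⟨r, hr⟩ | ⟨r, hr⟩
      · have ht : (t : Fin m) = ⟨2*r, by omega⟩ := by apply Fin.ext; simp; omega
        rw [ht, embO_even m _ u r (by omega),
          show 4*a+3+2*r = 2*((2*a+1)+r)+1 by ring, pf_odd hq,
          neg_one_pow_add_odd (2*a+1) r (by omega)]
        ring
      · have ht : (t : Fin m) = ⟨2*r+1, by omega⟩ := by apply Fin.ext; simp; omega
        rw [ht, embO_odd m _ u r (by omega),
          show 4*a+3+(2*r+1) = 2*((2*a+2)+r) by ring]
        exact hu ⟨r, by omega⟩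

lemma win0_eq {g q : ℕ → ℤ} (hq : PF g q) (m : ℕ) :
    Win q m 0 = embE m (g 0) '' Win (fun n => q (2*n)) ((m+1)/2) 0 ∪
      embE m (-(g 0)) '' Win (fun n => q (2*n)) ((m+1)/2) 1 := by
  ext w
  constructor
  · rintro ⟨j, hj1, hj2, hw⟩
    obtain ⟨c, rfl⟩ : ∃ c, j = 2*c := ⟨j/2, by omega⟩
    have hc1 : 1 ≤ c := by omega
    set u : Fin ((m+1)/2) → ℤ := fun r => w ⟨2*r.val, by have := r.isLt; omega⟩ with hu
    have hu_occ : ∀ r : Fin ((m+1)/2), u r = q (2*(c+r.val)) := by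
      intro r
      rw [hu]
      simp only []
      rw [hw ⟨2*r.val, by have := r.isLt; omega⟩]
      congr 1
      simp; ring
    have hweq : ∀ s : ℤ, (∀ (r : ℕ) (hr : 2*r+1 < m), w ⟨2*r+1, hr⟩ = s * (-1)^r) →
        w = embE m s u := by
      intro s hs
      funext t
      rcases Nat.even_or_odd t.val with ⟨r, hr⟩ | ⟨r, hr⟩
      · have ht : (t : Fin m) = ⟨2*r, by omega⟩ := by apply Fin.ext; simp; omega
        rw [ht, embE_even m s u r (by omega)]
      · have ht : (t : Fin m) = ⟨2*r+1, by omega⟩ := by apply Fin.ext; simp; omega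
        rw [ht, embE_odd m s u r (by omega)]
        exact hs r (by omega)
    rcases Nat.even_or_odd c with hc | hc
    · obtain ⟨a, rfl⟩ : ∃ a, c = 2*a := ⟨c/2, (by rcases hc with ⟨x,hx⟩; omega)⟩
      left
      refine ⟨u, ⟨2*a, by omega, by omega, hu_occ⟩, ?_⟩
      symm
      apply hweq
      intro r hr
      rw [hw ⟨2*r+1, hr⟩]
      simp only []
      rw [show 2*(2*a)+(2*r+1) = 2*(2*a+r)+1 by ring, pf_odd hq,
        neg_one_pow_add_even (2*a) r (by omega)]
    · obtain ⟨a, rfl⟩ : ∃ a, c = 2*a+1 := ⟨c/2, (by rcases hc with ⟨x,hx⟩; omega)⟩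
      right
      refine ⟨u, ⟨2*a+1, by omega, by omega, hu_occ⟩, ?_⟩
      symm
      apply hweq
      intro r hr
      rw [hw ⟨2*r+1, hr⟩]
      simp only []
      rw [show 2*(2*a+1)+(2*r+1) = 2*((2*a+1)+r)+1 by ring, pf_odd hq,
        neg_one_pow_add_odd (2*a+1) r (by omega)]
      ring
  · rintro (⟨u, ⟨j₁, hj₁, hpar, hu⟩, rfl⟩ | ⟨u, ⟨j₁, hj₁, hpar, hu⟩, rfl⟩)
    · obtain ⟨a, rfl⟩ : ∃ a, j₁ = 2*a+2 := ⟨(j₁-2)/2, by omega⟩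
      refine ⟨2*(2*a+2), by omega, by omega, ?_⟩
      intro t
      rcases Nat.even_or_odd t.val with ⟨r, hr⟩ | ⟨r, hr⟩
      · have ht : (t : Fin m) = ⟨2*r, by omega⟩ := by apply Fin.ext; simp; omega
        rw [ht, embE_even m _ u r (by omega),
          show 2*(2*a+2)+2*r = 2*((2*a+2)+r) by ring]
        exact hu ⟨r, by omega⟩
      · have ht : (t : Fin m) = ⟨2*r+1, by omega⟩ := by apply Fin.ext; simp; omega
        rw [ht, embE_odd m _ u r (by omega),
          show 2*(2*a+2)+(2*r+1) = 2*((2*a+2)+r)+1 by ring, pf_odd hq,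
          neg_one_pow_add_even (2*a+2) r (by omega)]
    · obtain ⟨a, rfl⟩ : ∃ a, j₁ = 2*a+1 := ⟨j₁/2, by omega⟩
      refine ⟨2*(2*a+1), by omega, by omega, ?_⟩
      intro t
      rcases Nat.even_or_odd t.val with ⟨r, hr⟩ | ⟨r, hr⟩
      · have ht : (t : Fin m) = ⟨2*r, by omega⟩ := by apply Fin.ext; simp; omega
        rw [ht, embE_even m _ u r (by omega),
          show 2*(2*a+1)+2*r = 2*((2*a+1)+r) by ring]
        exact hu ⟨r, by omega⟩
      · have ht : (t : Fin m) = ⟨2*r+1, by omega⟩ := by apply Fin.ext; simp; omega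
        rw [ht, embE_odd m _ u r (by omega),
          show 2*(2*a+1)+(2*r+1) = 2*((2*a+1)+r)+1 by ring, pf_odd hq,
          neg_one_pow_add_odd (2*a+1) r (by omega)]
        ring

lemma embO_inj (m : ℕ) (s : ℤ) : Function.Injective (embO m s) := by
  intro u v huv
  funext r
  have hr : 2*r.val+1 < m := by have := r.isLt; omega
  have h1 := embO_odd m s u r.val hr
  have h2 := embO_odd m s v r.val hr
  rw [huv] at h1
  rw [h1] at h2
  have : r = (⟨r.val, by omega⟩ : Fin (m/2)) := by apply Fin.ext; rfl
  rw [this]; exact h2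

lemma embE_inj (m : ℕ) (s : ℤ) : Function.Injective (embE m s) := by
  intro u v huv
  funext r
  have hr : 2*r.val < m := by have := r.isLt; omega
  have h1 := embE_even m s u r.val hr
  have h2 := embE_even m s v r.val hr
  rw [huv] at h1
  rw [h1] at h2
  have : r = (⟨r.val, by omega⟩ : Fin ((m+1)/2)) := by apply Fin.ext; rfl
  rw [this]; exact h2

lemma embO_im_disj (m : ℕ) (hm : 1 ≤ m) (s s' : ℤ) (hss : s ≠ s')
    (A B : Set (Fin (m/2) → ℤ)) : Disjoint (embO m s '' A) (embO m s' '' B) := by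
  rw [Set.disjoint_left]
  rintro w ⟨u, -, rfl⟩ ⟨v, -, hv⟩
  have h1 := embO_even m s u 0 (by omega)
  have h2 := embO_even m s' v 0 (by omega)
  rw [hv] at h2
  rw [h1] at h2
  simp at h2
  exact hss h2

lemma embE_im_disj (m : ℕ) (hm : 2 ≤ m) (s s' : ℤ) (hss : s ≠ s')
    (A B : Set (Fin ((m+1)/2) → ℤ)) : Disjoint (embE m s '' A) (embE m s' '' B) := by
  rw [Set.disjoint_left]
  rintro w ⟨u, -, rfl⟩ ⟨v, -, hv⟩
  have h1 := embE_odd m s u 0 (by omega)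
  have h2 := embE_odd m s' v 0 (by omega)
  rw [hv] at h2
  rw [h1] at h2
  simp at h2
  exact hss h2

lemma pm1_ne (g : ℕ → ℤ) (hg : PM1 g) : g 0 ≠ -(g 0) := by
  rcases hg 0 with h | h <;> rw [h] <;> norm_num

/-- the two values ±1 both occur among q at positions of any fixed parity -/
lemma win_one (g q : ℕ → ℤ) (hg : PM1 g) (hq : PF g q) (ε : ℕ) (hε : ε < 2) :
    (Win q 1 ε).ncard = 2 := by
  have hval : ∀ x : ℤ, (x = -1 ∨ x = 1) → ∃ j, 1 ≤ j ∧ j % 2 = ε ∧ q j = x := by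
    intro x hx
    interval_cases ε
    · -- even positions: q 2 = g 1, q 6 = -(g 1)
      have h2 : q 2 = g 1 := by simpa using hq 1 0
      have h6 : q 6 = -(g 1) := by
        have h := hq 1 1
        norm_num at h
        linarith
      rcases hg 1 with h | h <;> rcases hx with rfl | rfl
      · exact ⟨2, by omega, by omega, by rw [h2, h]⟩
      · exact ⟨6, by omega, by omega, by simp [h6, h]⟩
      · exact ⟨6, by omega, by omega, by simp [h6, h]⟩
      · exact ⟨2, by omega, by omega, by rw [h2, h]⟩
    · have h1 : q 1 = g 0 := by simpa using hq 0 0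
      have h3 : q 3 = -(g 0) := by
        have h := hq 0 1
        norm_num at h
        linarith
      rcases hg 0 with h | h <;> rcases hx with rfl | rfl
      · exact ⟨1, by omega, by omega, by rw [h1, h]⟩
      · exact ⟨3, by omega, by omega, by simp [h3, h]⟩
      · exact ⟨3, by omega, by omega, by simp [h3, h]⟩
      · exact ⟨1, by omega, by omega, by rw [h1, h]⟩
  have heq : Win q 1 ε = {(fun _ => -1 : Fin 1 → ℤ), (fun _ => 1 : Fin 1 → ℤ)} := by
    ext w
    constructor
    · rintro ⟨j, hj1, hj2, hw⟩
      have := pf_val hq hg j hj1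
      rcases this with h | h
      · left; funext t
        have := hw t
        have ht : t.val = 0 := by omega
        rw [this, ht]; simpa using h
      · right; funext t
        have := hw t
        have ht : t.val = 0 := by omega
        rw [this, ht]; simpa using h
    · rintro (rfl | rfl)
      · obtain ⟨j, hj1, hj2, hj3⟩ := hval (-1) (Or.inl rfl)
        exact ⟨j, hj1, hj2, fun t => by have : t.val = 0 := by omega
                                        rw [this]; exact hj3.symm⟩
      · obtain ⟨j, hj1, hj2, hj3⟩ := hval 1 (Or.inr rfl)
        exact ⟨j, hj1, hj2, fun t => by have : t.val = 0 := by omega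
                                        rw [this]; exact hj3.symm⟩
  rw [heq]
  apply Set.ncard_pair
  intro h
  have := congrFun h 0
  norm_num at this

lemma Tcount : ∀ m g q, PM1 g → PF g q → 1 ≤ m →
    (Win q m 0).ncard + (Win q m 1).ncard = 4 * m := by
  intro m
  induction m using Nat.strong_induction_on with
  | _ m IH =>
    intro g q hg hq hm
    set q' : ℕ → ℤ := fun n => q (2*n) with hq'def
    have hq' : PF (fun k => g (k+1)) q' := pf_shift hq
    have hg' : PM1 (fun k => g (k+1)) := fun k => hg (k+1)
    rcases eq_or_lt_of_le hm with h1 | h2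
    · rw [← h1]
      rw [win_one g q hg hq 0 (by omega), win_one g q hg hq 1 (by omega)]
    · -- m ≥ 2
      have hm2 : 2 ≤ m := h2
      have hfin : ∀ ℓ ε, (Win q' ℓ ε).Finite := fun ℓ ε => win_finite hq' hg' ℓ ε
      have hIH1 := IH (m/2) (by omega) _ q' hg' hq' (by omega)
      have hIH2 := IH ((m+1)/2) (by omega) _ q' hg' hq' (by omega)
      have h1 : (Win q m 1).ncard = 4 * (m/2) := by
        rw [win1_eq hq m]
        rw [Set.ncard_union_eq (embO_im_disj m (by omega) _ _ (pm1_ne g hg) _ _)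
          (Set.Finite.image _ (hfin _ _)) (Set.Finite.image _ (hfin _ _))]
        rw [Set.ncard_image_of_injective _ (embO_inj m _),
          Set.ncard_image_of_injective _ (embO_inj m _)]
        omega
      have h0 : (Win q m 0).ncard = 4 * ((m+1)/2) := by
        rw [win0_eq hq m]
        rw [Set.ncard_union_eq (embE_im_disj m (by omega) _ _ (pm1_ne g hg) _ _)
          (Set.Finite.image _ (hfin _ _)) (Set.Finite.image _ (hfin _ _))]
        rw [Set.ncard_image_of_injective _ (embE_inj m _),
          Set.ncard_image_of_injective _ (embE_inj m _)]
        omega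
      rw [h0, h1]
      omega

lemma disj01 {g q : ℕ → ℤ} (hg : PM1 g) (hq : PF g q) (m : ℕ) (hm : 7 ≤ m) :
    Disjoint (Win q m 0) (Win q m 1) := by
  rw [Set.disjoint_left]
  rintro w ⟨j, hj1, hj2, hw⟩ ⟨j', hj1', hj2', hw'⟩
  -- from odd occurrence j': w (2r) = s * (-1)^r with s = ± g 0
  obtain ⟨c, rfl⟩ : ∃ c, j' = 2*c+1 := ⟨j'/2, by omega⟩
  have hodd : ∀ (r : ℕ) (hr : 2*r < m), w ⟨2*r, hr⟩ = (g 0 * (-1)^c) * (-1)^r := by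
    intro r hr
    rw [hw' ⟨2*r, hr⟩]
    simp only []
    rw [show 2*c+1+2*r = 2*(c+r)+1 by ring, pf_odd hq, pow_add]
    ring
  -- from even occurrence j: w (2r) = q (2 (c' + r)) where j = 2 c'
  obtain ⟨c', rfl⟩ : ∃ c', j = 2*c' := ⟨j/2, by omega⟩
  have hc' : 1 ≤ c' := by omega
  have heven : ∀ (r : ℕ) (hr : 2*r < m), w ⟨2*r, hr⟩ = q (2*(c'+r)) := by
    intro r hr
    rw [hw ⟨2*r, hr⟩]
    congr 1
    simp; ring
  -- q' (c'+r) = s (-1)^r for r = 0..3 contradicts alternation at odd positions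
  have key : ∀ (r : ℕ), r ≤ 3 → q (2*(c'+r)) = (g 0 * (-1)^c) * (-1)^r := by
    intro r hr
    rw [← heven r (by omega), hodd r (by omega)]
  set q' : ℕ → ℤ := fun n => q (2*n) with hq'def
  have hq' : PF (fun k => g (k+1)) q' := pf_shift hq
  have hs : g 0 * (-1)^c ≠ 0 := by
    rcases hg 0 with h | h <;> rcases Nat.even_or_odd c with he | ho
    · simp [h, he.neg_one_pow]
    · simp [h, ho.neg_one_pow]
    · simp [h, he.neg_one_pow]
    · simp [h, ho.neg_one_pow]
  rcases Nat.even_or_odd c' with ⟨a, ha⟩ | ⟨a, ha⟩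
  · -- c' even: use odd positions c'+1, c'+3 of q'
    have e1 : q' (c'+1) = -(g 0 * (-1)^c) := by
      have := key 1 (by omega); rw [hq'def]; simp only []; rw [this]; ring
    have e3 : q' (c'+3) = -(g 0 * (-1)^c) := by
      have := key 3 (by omega); rw [hq'def]; simp only []; rw [this]; ring
    have halt : q' (2*a+3) = - q' (2*a+1) := pf_alt hq' a
    rw [show 2*a+1 = c'+1 by omega, show 2*a+3 = c'+3 by omega] at halt
    rw [e1, e3] at halt
    have : g 0 * (-1)^c = 0 := by linarith
    exact hs this
  · -- c' odd: use odd positions c', c'+2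
    have e0 : q' c' = (g 0 * (-1)^c) := by
      have := key 0 (by omega); rw [hq'def]; simp only []
      rw [show c' = c' + 0 by omega, this]; ring
    have e2 : q' (c'+2) = (g 0 * (-1)^c) := by
      have := key 2 (by omega); rw [hq'def]; simp only []; rw [this]; ring
    have halt : q' (2*a+3) = - q' (2*a+1) := pf_alt hq' a
    rw [show 2*a+1 = c' by omega, show 2*a+3 = c'+2 by omega] at halt
    rw [e0, e2] at halt
    have : g 0 * (-1)^c = 0 := by linarith
    exact hs this

lemma Pcount {g q : ℕ → ℤ} (hg : PM1 g) (hq : PF g q) (m : ℕ) (hm : 7 ≤ m) :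
    (Win q m 0 ∪ Win q m 1).ncard = 4 * m := by
  rw [Set.ncard_union_eq (disj01 hg hq m hm) (win_finite hq hg m 0) (win_finite hq hg m 1)]
  exact Tcount m g q hg hq (by omega)

lemma pf_qp {g q : ℕ → ℤ} (hq : PF g q) (M k t : ℕ) (ht1 : 1 ≤ t) (ht2 : t < 2^M) :
    q (2^(M+1) * k + t) = q t := by
  obtain ⟨a, b, rfl⟩ := two_adic t ht1
  have ha : a < M := by
    have h1 : 2^a ≤ 2^a * (2*b+1) := Nat.le_mul_of_pos_right _ (by omega)
    have h2 : 2^a < 2^M := by omega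
    exact (Nat.pow_lt_pow_iff_right (by norm_num)).mp h2
  have h2 : (2:ℕ)^(M+1) = 2^a * (2 * 2^(M-a)) := by
    rw [show 2 * 2^(M-a) = 2^(M-a+1) by rw [pow_succ]; ring, ← pow_add]
    congr 1
    omega
  have key : 2^(M+1)*k + 2^a*(2*b+1) = 2^a * (2*(2^(M-a)*k + b) + 1) := by
    rw [h2]; ring
  rw [key, hq a _, hq a b]
  congr 1
  apply neg_one_pow_add_even
  have h3 : 2^(M-a) = 2 * 2^(M-a-1) := by
    rw [← pow_succ']
    congr 1
    omega
  have h4 : 2^(M-a) * k = 2 * (2^(M-a-1) * k) := by rw [h3]; ring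
  omega

lemma foldAux_length (M : List ℤ) : (foldAux M).length = 2^M.length - 1 := by
  induction M with
  | nil => rfl
  | cons a M IH =>
    have h1 : (0:ℕ) < 2^M.length := Nat.pow_pos (by norm_num)
    have hpow : 2^(M.length+1) = 2 * 2^M.length := by rw [pow_succ]; ring
    simp only [foldAux, List.length_append, List.length_cons, List.length_map,
      List.length_reverse, IH]
    omega

lemma revneg_getD (F : List ℤ) (i : ℕ) (hi : i < F.length) :
    (F.reverse.map (fun x => -x)).getD i 0 = -(F.getD (F.length - 1 - i) 0) := by
  have h1 : i < (F.reverse.map (fun x => -x)).length := by simpa using hi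
  rw [List.getD_eq_getElem _ _ h1, List.getD_eq_getElem _ _ (by omega)]
  rw [List.getElem_map, List.getElem_reverse]

lemma foldAux_getD : ∀ (M : List ℤ) (k j : ℕ), 2^k * (2*j+1) ≤ 2^M.length - 1 →
    (foldAux M).getD (2^k * (2*j+1) - 1) 0 = M.getD (M.length - 1 - k) 0 * (-1)^j := by
  intro M
  induction M with
  | nil =>
    intro k j hn
    exfalso
    have h1 : 0 < 2^k * (2*j+1) := by positivity
    simp only [List.length_nil, pow_zero] at hn
    omega
  | cons a M IH =>
    intro k j hn
    set m := M.length with hm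
    set F := foldAux M with hF
    have hL : F.length = 2^m - 1 := foldAux_length M
    have h2m : (1:ℕ) ≤ 2^m := Nat.one_le_two_pow
    have h2k : (1:ℕ) ≤ 2^k := Nat.one_le_two_pow
    have hlen : (a :: M : List ℤ).length = m + 1 := by simp [hm]
    have hpow : 2^(m+1) = 2 * 2^m := by rw [pow_succ]; ring
    rw [hlen] at hn
    set n := 2^k * (2*j+1) with hndef
    have hmul : ∀ b c : ℕ, b ≤ c → 2^k * b ≤ 2^k * c := fun b c h => Nat.mul_le_mul_left _ h
    have hn1 : 1 ≤ n := by
      have := hmul 1 (2*j+1) (by omega)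
      rw [hndef]; omega
    have hfold : foldAux (a :: M) = F ++ a :: (F.reverse.map (fun x => -x)) := rfl
    rcases Nat.lt_trichotomy n (2^m) with hlt | heq | hgt
    · -- prefix case
      have hk : k < m := by
        have h1 : 2^k ≤ n := by
          have := hmul 1 (2*j+1) (by omega)
          rw [hndef]; omega
        have h2 : 2^k < 2^m := by omega
        exact (Nat.pow_lt_pow_iff_right (by norm_num)).mp h2
      rw [hfold, List.getD_append _ _ _ _ (by omega)]
      rw [IH k j (by omega)]
      have : (a :: M : List ℤ).getD (m + 1 - 1 - k) 0 = M.getD (m - 1 - k) 0 := by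
        have h3 : m + 1 - 1 - k = (m - 1 - k) + 1 := by omega
        rw [h3, List.getD_cons_succ]
      rw [hlen, this]
    · -- n = 2^m : middle element
      have hj : j = 0 := by
        by_contra hj0
        have hj1 : 1 ≤ j := by omega
        have h1 : 2^k * 3 ≤ n := by
          have := hmul 3 (2*j+1) (by omega)
          rw [hndef]; omega
        have hk : k ≤ m := by
          have h2 : 2^k ≤ 2^m := by
            have := hmul 1 (2*j+1) (by omega)
            omega
          exact (Nat.pow_le_pow_iff_right (by norm_num)).mp h2
        have h3 : 2^m ≤ 2^k * 2^(m-k) := by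
          rw [← pow_add]
          apply Nat.pow_le_pow_right (by norm_num)
          omega
        -- n = 2^k (2j+1) = 2^m, odd factor > 1 impossible
        have h4 : 2^k * (2*j+1) = 2^k * 2^(m-k) := by
          rw [← pow_add, show k + (m-k) = m by omega]
          omega
        have h5 : 2*j+1 = 2^(m-k) := Nat.eq_of_mul_eq_mul_left (by omega) h4
        rcases Nat.eq_zero_or_pos (m-k) with h6 | h6
        · rw [h6] at h5; simp at h5; omega
        · have : 2^(m-k) % 2 = 0 := by
            have : 2^(m-k) = 2 * 2^(m-k-1) := by
              rw [← pow_succ']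
              congr 1
              omega
            omega
          omega
      subst hj
      have hk : k = m := by
        simp at hndef
        have : 2^k = 2^m := by omega
        exact Nat.pow_right_injective (by norm_num) this
      rw [hfold, List.getD_append_right _ _ _ _ (by omega)]
      have h7 : n - 1 - F.length = 0 := by omega
      rw [h7]
      simp [hlen, hk]
    · -- reflected part
      have hk : k < m := by
        have h5 : 2^k ≤ n := by
          have := hmul 1 (2*j+1) (by omega)
          rw [hndef]; omega
        have h6 : 2^k < 2^(m+1) := by omega
        have h7 : k < m + 1 := (Nat.pow_lt_pow_iff_right (by norm_num)).mp h6
        rcases Nat.lt_or_ge k m with h | h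
        · exact h
        · exfalso
          have hkm : k = m := by omega
          subst hkm
          rcases Nat.eq_zero_or_pos j with rfl | hj1
          · have h9 : n = 2^m := by rw [hndef]; ring
            omega
          · have h9 : 2^m * 3 ≤ n := by
              have := hmul 3 (2*j+1) (by omega)
              rw [hndef]; omega
            omega
      set e := m - k with he
      have he1 : 1 ≤ e := by omega
      have hkem : k + e = m := by omega
      have hpe : 2^m = 2^k * 2^e := by rw [← pow_add, hkem]
      have hje : j + 1 ≤ 2^e := by
        by_contra hc
        push_neg at hc
        have : 2^e + 1 ≤ j + 1 := by omega
        have h8 : 2^k * (2 * 2^e + 1) ≤ n := by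
          have := hmul (2 * 2^e + 1) (2*j+1) (by omega)
          rw [hndef]; omega
        have h9 : 2^k * (2 * 2^e + 1) = 2*(2^k * 2^e) + 2^k := by ring
        omega
      set j' := 2^e - (j+1) with hj'
      have hnbar : 2^(m+1) - n = 2^k * (2*j'+1) := by
        have h9 : (2*j'+1) + (2*j+1) = 2*2^e := by omega
        have h10 : 2^k*(2*j'+1) + 2^k*(2*j+1) = 2^(m+1) := by
          rw [← Nat.left_distrib, h9, hpow, hpe]
          ring
        omega
      have hnbar_le : 2^k * (2*j'+1) ≤ 2^m - 1 := by omega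
      have hIH := IH k j' hnbar_le
      rw [hfold, List.getD_append_right _ _ _ _ (by omega)]
      have h10 : n - 1 - F.length = (n - 2^m - 1) + 1 := by omega
      rw [h10, List.getD_cons_succ]
      rw [revneg_getD F _ (by omega)]
      have h11 : F.length - 1 - (n - 2^m - 1) = 2^k * (2*j'+1) - 1 := by omega
      rw [h11, hIH]
      have h12 : (a :: M : List ℤ).getD (m + 1 - 1 - k) 0 = M.getD (m - 1 - k) 0 := by
        have h3 : m + 1 - 1 - k = (m - 1 - k) + 1 := by omega
        rw [h3, List.getD_cons_succ]
      rw [hlen, h12]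
      -- sign: -(x * (-1)^j') = x * (-1)^j  since j + j' = 2^e - 1 odd
      have hsum : j' + j = 2^e - 1 := by omega
      have h2e : 2^e = 2 * 2^(e-1) := by
        rw [← pow_succ']
        congr 1
        omega
      rcases Nat.even_or_odd j with ⟨x, hx⟩ | ⟨x, hx⟩
      · have hj'odd : Odd j' := by
          refine ⟨(j' - 1)/2, ?_⟩
          omega
        rw [hj'odd.neg_one_pow, hx, Even.neg_one_pow ⟨x, by omega⟩]
        ring
      · have hj'even : Even j' := by
          refine ⟨j'/2, ?_⟩
          omega
        rw [hj'even.neg_one_pow, hx, Odd.neg_one_pow ⟨x, by omega⟩]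
        ring

lemma isLimit_pf {f p : ℕ → ℤ} (hp : IsLimit f p) (k j : ℕ) :
    p (2^k * (2*j+1)) = f k * (-1)^j := by
  have h2k : (1:ℕ) ≤ 2^k := Nat.one_le_two_pow
  have hT : 2*j+1 < 2^(2*j+1) := Nat.lt_two_pow_self
  have hpa : (2:ℕ)^(k + (2*j+1)) = 2^k * 2^(2*j+1) := pow_add 2 k (2*j+1)
  have hmul : 2^k * ((2*j+1) + 1) ≤ 2^k * 2^(2*j+1) := Nat.mul_le_mul_left _ (by omega)
  have hdist : 2^k * ((2*j+1) + 1) = 2^k * (2*j+1) + 2^k := by ring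
  have hn1 : 1 ≤ 2^k * (2*j+1) := by
    have := Nat.mul_le_mul_left (2^k) (show 1 ≤ 2*j+1 by omega)
    omega
  have hn : 2^k * (2*j+1) ≤ 2^(k + (2*j+1)) - 1 := by omega
  set m := k + (2*j+1) with hm
  have hMlen : (((List.range m).map f).reverse : List ℤ).length = m := by simp
  have hlen2 : (paper ((List.range m).map f)).length = 2^m - 1 := by
    show (foldAux ((List.range m).map f).reverse).length = 2^m - 1
    rw [foldAux_length, hMlen]
  have h2m : (1:ℕ) ≤ 2^m := Nat.one_le_two_pow
  have hidx : 2^k * (2*j+1) - 1 < (paper ((List.range m).map f)).length := by omega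
  have hpeq := hp m (2^k * (2*j+1) - 1) hidx
  rw [show 2^k * (2*j+1) - 1 + 1 = 2^k * (2*j+1) by omega] at hpeq
  rw [hpeq]
  show (foldAux ((List.range m).map f).reverse).getD (2^k * (2*j+1) - 1) 0 = f k * (-1)^j
  rw [foldAux_getD _ k j (by rw [hMlen]; exact hn)]
  congr 1
  rw [hMlen]
  have hidx2 : m - 1 - k = 2*j := by omega
  rw [hidx2]
  have hlt : 2*j < (((List.range m).map f) : List ℤ).length := by simp; omega
  have hlt' : 2*j < (((List.range m).map f).reverse : List ℤ).length := by rw [hMlen]; omega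
  rw [List.getD_eq_getElem _ _ hlt', List.getElem_reverse]
  rw [List.getElem_map, List.getElem_range]
  congr 1
  simp
  omega


end RunSeqPf

open RunSeqPf

theorem runSeq_complexity (f p : ℕ → ℤ) (E : ℕ → ℕ)
    (hf : ∀ n, f n = -1 ∨ f n = 1) (hp : IsLimit f p) (hE : IsRunEnds p E)
    (R : ℕ → ℕ) (hR : ∀ k, R k = E k - E (k - 1)) (n : ℕ) (hn : 6 ≤ n) :
    {v : Fin n → ℕ | ∃ i, 1 ≤ i ∧ ∀ t : Fin n, v t = R (i + t.val)}.ncard = 4 * n + 4 := by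
  classical
  have hpc : ∀ k j, p (2^k * (2*j+1)) = f k * (-1)^j := fun k j => isLimit_pf hp k j
  set q : ℕ → ℤ := fun m => f 0 * (-1)^(m+1) * p (2*m) with hqdef
  set c : ℕ → ℤ := fun k => if k = 0 then f 0 * f 1 else -(f 0 * f (k+1)) with hcdef
  have hc : PM1 c := by
    intro k
    cases k with
    | zero => rcases hf 0 with h0 | h0 <;> rcases hf 1 with h1 | h1 <;> simp [hcdef, h0, h1]
    | succ k => rcases hf 0 with h0 | h0 <;> rcases hf (k+2) with h1 | h1 <;> simp [hcdef, h0, h1]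
  have hqpf : PF c q := by
    intro k j
    show f 0 * (-1)^(2^k*(2*j+1)+1) * p (2*(2^k*(2*j+1))) = c k * (-1)^j
    have h2 : 2*(2^k*(2*j+1)) = 2^(k+1)*(2*j+1) := by rw [pow_succ]; ring
    rw [h2, hpc (k+1) j]
    cases k with
    | zero =>
      have he : ((-1:ℤ))^(2^0*(2*j+1)+1) = 1 := Even.neg_one_pow ⟨j+1, by simp only [pow_zero, one_mul]; omega⟩
      rw [he]
      simp [hcdef]
      ring
    | succ k =>
      have ho : ((-1:ℤ))^(2^(k+1)*(2*j+1)+1) = -1 := by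
        apply Odd.neg_one_pow
        refine ⟨2^k*(2*j+1), ?_⟩
        rw [pow_succ]; ring
      rw [ho]
      simp [hcdef]
      ring
  have hqval : ∀ m, 1 ≤ m → q m = -1 ∨ q m = 1 := pf_val hqpf hc
  set bb : ℕ → ℕ := fun m => if m = 0 then 0 else (if q m = 1 then 0 else 1) with hbbdef
  have hbb01 : ∀ m, bb m ≤ 1 := by
    intro m
    simp only [hbbdef]
    split
    · omega
    · split <;> omega
  have hbb0 : bb 0 = 0 := by simp [hbbdef]
  have hqodd : ∀ m, p (2*m+1) = f 0 * (-1)^m := fun m => by simpa using hpc 0 m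
  have hpval : ∀ x, 1 ≤ x → p x = -1 ∨ p x = 1 := by
    intro x hx
    obtain ⟨k, j, rfl⟩ := two_adic x hx
    rw [hpc k j]
    rcases hf k with h1 | h1 <;> rcases Nat.even_or_odd j with he | ho
    · simp [h1, he.neg_one_pow]
    · simp [h1, ho.neg_one_pow]
    · simp [h1, he.neg_one_pow]
    · simp [h1, ho.neg_one_pow]
  -- run-end characterization at odd and even positions
  have hqformula : ∀ m', q (m'+1) = (f 0 * (-1)^m') * p (2*(m'+1)) := by
    intro m'
    show f 0 * (-1)^(m'+1+1) * p (2*(m'+1)) = _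
    have : ((-1:ℤ))^(m'+1+1) = (-1)^m' := by
      rw [show m'+1+1 = m'+2 by omega, pow_add]
      norm_num
    rw [this]
  have hsval : ∀ m', f 0 * (-1:ℤ)^m' = -1 ∨ f 0 * (-1:ℤ)^m' = 1 := by
    intro m'
    rcases hf 0 with h1 | h1 <;> rcases Nat.even_or_odd m' with he | ho
    · simp [h1, he.neg_one_pow]
    · simp [h1, ho.neg_one_pow]
    · simp [h1, he.neg_one_pow]
    · simp [h1, ho.neg_one_pow]
  have hbbiff : ∀ y : ℕ, (bb (y+1) = 1 ↔ q (y+1) = -1) ∧ (bb (y+1) = 0 ↔ q (y+1) = 1) := by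
    intro y
    have h3 : bb (y+1) = if q (y+1) = 1 then 0 else 1 := by simp [hbbdef]
    rcases hqval (y+1) (by omega) with h | h <;> rw [h3, h] <;> norm_num
  have hA : ∀ m', (p (2*m'+1) ≠ p (2*m'+2) ↔ bb (m'+1) = 1) := by
    intro m'
    have h1 : p (2*m'+1) = f 0 * (-1)^m' := hqodd m'
    have h2 : q (m'+1) = (f 0 * (-1)^m') * p (2*m'+2) := by
      have h := hqformula m'
      rw [show 2*(m'+1) = 2*m'+2 from by omega] at h
      exact h
    rw [(hbbiff m').1]
    rcases hsval m' with hs | hs <;> rcases hpval (2*m'+2) (by omega) with hx | hx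
    · rw [h1, h2, hs, hx]; norm_num
    · rw [h1, h2, hs, hx]; norm_num
    · rw [h1, h2, hs, hx]; norm_num
    · rw [h1, h2, hs, hx]; norm_num
  have hB : ∀ m', (p (2*m'+2) ≠ p (2*m'+3) ↔ bb (m'+1) = 0) := by
    intro m'
    have h1 : p (2*m'+3) = -(f 0 * (-1)^m') := by
      rw [show 2*m'+3 = 2*(m'+1)+1 by omega, hqodd (m'+1), pow_succ]
      ring
    have h2 : q (m'+1) = (f 0 * (-1)^m') * p (2*m'+2) := by
      have h := hqformula m'
      rw [show 2*(m'+1) = 2*m'+2 from by omega] at h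
      exact h
    rw [(hbbiff m').2]
    rcases hsval m' with hs | hs <;> rcases hpval (2*m'+2) (by omega) with hx | hx
    · rw [h1, h2, hs, hx]; norm_num
    · rw [h1, h2, hs, hx]; norm_num
    · rw [h1, h2, hs, hx]; norm_num
    · rw [h1, h2, hs, hx]; norm_num
  obtain ⟨hE0, hEmono, hEiff⟩ := hE
  -- every run end is some 2m - bb m and conversely
  have hre : ∀ x, 1 ≤ x → ((∃ n, 1 ≤ n ∧ E n = x) ↔ (∃ m, 1 ≤ m ∧ x = 2*m - bb m)) := by
    intro x hx
    rw [hEiff x hx]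
    constructor
    · intro hne
      rcases Nat.even_or_odd x with ⟨y, hy⟩ | ⟨y, hy⟩
      · -- x = 2y, even : x = 2*y - bb y with bb y = 0
        have hy1 : 1 ≤ y := by omega
        obtain ⟨m', rfl⟩ : ∃ m', y = m'+1 := ⟨y-1, by omega⟩
        have := (hB m').mp (by rw [show 2*m'+2 = x by omega, show 2*m'+3 = x + 1 by omega]; exact hne)
        exact ⟨m'+1, by omega, by omega⟩
      · have := (hA y).mp (by rw [show 2*y+1 = x by omega, show 2*y+2 = x + 1 by omega]; exact hne)
        exact ⟨y+1, by omega, by omega⟩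
    · rintro ⟨m, hm1, hxm⟩
      obtain ⟨m', rfl⟩ : ∃ m', m = m'+1 := ⟨m-1, by omega⟩
      have hbm := hbb01 (m'+1)
      rcases Nat.lt_or_ge (bb (m'+1)) 1 with h0 | h1
      · have h0' : bb (m'+1) = 0 := by omega
        have := (hB m').mpr h0'
        rw [show 2*m'+2 = x by omega, show 2*m'+3 = x+1 by omega] at this
        exact this
      · have h1' : bb (m'+1) = 1 := by omega
        have := (hA m').mpr h1'
        rw [show 2*m'+1 = x by omega, show 2*m'+2 = x+1 by omega] at this
        exact this
  have hEf : ∀ n, 1 ≤ n → E n = 2*n - bb n := by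
    intro n
    induction n using Nat.strong_induction_on with
    | _ n IH =>
      intro hn1
      have hEn_pos : 1 ≤ E n := by
        have h1 : n ≤ E n := hEmono.le_apply
        omega
      obtain ⟨m, hm1, hEnm⟩ := (hre (E n) hEn_pos).mp ⟨n, hn1, rfl⟩
      obtain ⟨n', hn'1, hEn'⟩ := (hre (2*n - bb n) (by have := hbb01 n; omega)).mpr ⟨n, hn1, rfl⟩
      rcases Nat.lt_trichotomy m n with h | h | h
      · exfalso
        have hEm := IH m h hm1
        have : E n = E m := by omega
        have := hEmono.injective this
        omega
      · subst h
        omega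
      · exfalso
        have hbn := hbb01 n
        have hbm := hbb01 m
        have h1 : E n' < E n := by omega
        have h2 : n' < n := by
          by_contra hcon
          push_neg at hcon
          have := hEmono.le_iff_le.mpr hcon
          omega
        have h3 : E n' = 2*n' - bb n' := IH n' h2 hn'1
        have hbn' := hbb01 n'
        omega
  have hRf : ∀ k, 1 ≤ k → R k = (2 + bb (k-1)) - bb k := by
    intro k hk
    rcases Nat.lt_or_ge k 2 with h | h
    · have hk1 : k = 1 := by omega
      subst hk1
      rw [hR 1, hE0, hEf 1 (by omega), show (1:ℕ)-1 = 0 by omega, hbb0]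
      have := hbb01 1
      omega
    · obtain ⟨k', rfl⟩ : ∃ k', k = k'+2 := ⟨k-2, by omega⟩
      rw [hR (k'+2), hEf (k'+2) (by omega), show k'+2-1 = k'+1 by omega, hEf (k'+1) (by omega)]
      have := hbb01 (k'+1)
      have := hbb01 (k'+2)
      omega
  -- occurrence of the initial window
  have hJ : ∃ J, 1 ≤ J ∧ J % 2 = 0 ∧ q J = 1 ∧ ∀ t, 1 ≤ t → t ≤ n → q (J + t) = q t := by
    have hqp : ∀ k t, 1 ≤ t → t ≤ n → q (2^(n+1) * k + t) = q t := by
      intro k t ht1 ht2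
      exact pf_qp hqpf n k t ht1 (by calc t ≤ n := ht2
                                        _ < 2^n := Nat.lt_two_pow_self)
    have h2n : 1 ≤ 2^(n+1) := Nat.one_le_two_pow
    have heven : ∀ k, (2^(n+1) * k) % 2 = 0 := by
      intro k
      have h1 : 2^(n+1) * k = 2*(2^n * k) := by rw [pow_succ]; ring
      omega
    rcases hc (n+1) with h1 | h1
    · -- c (n+1) = -1 : use k = 3
      refine ⟨2^(n+1) * 3, by omega, heven 3, ?_, fun t => hqp 3 t⟩
      have := hqpf (n+1) 1
      rw [show 2^(n+1)*(2*1+1) = 2^(n+1)*3 by ring] at this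
      rw [this, h1]
      norm_num
    · refine ⟨2^(n+1) * 1, by omega, heven 1, ?_, fun t => hqp 1 t⟩
      have := hqpf (n+1) 0
      rw [show 2^(n+1)*(2*0+1) = 2^(n+1)*1 by ring] at this
      rw [this, h1]
      norm_num
  obtain ⟨J, hJ1, hJev, hJq, hJqp⟩ := hJ
  -- the coding map
  set Φ : (Fin (n+1) → ℤ) → (Fin n → ℕ) :=
    fun w t => (2 + (if w t.castSucc = 1 then 0 else 1)) - (if w t.succ = 1 then 0 else 1)
    with hΦdef
  have hbbpos : ∀ x, 1 ≤ x → bb x = if q x = 1 then 0 else 1 := by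
    intro x hx
    simp [hbbdef, show x ≠ 0 by omega]
  have hPhiR : ∀ j, 1 ≤ j → ∀ t : Fin n,
      ((2 + (if q (j + t.val) = 1 then 0 else 1)) - (if q (j + (t.val + 1)) = 1 then 0 else 1) : ℕ)
        = R (j + 1 + t.val) := by
    intro j hj t
    rw [hRf (j+1+t.val) (by omega), show j+1+t.val-1 = j+t.val by omega,
      show j+1+t.val = j+(t.val+1) by omega]
    rw [hbbpos (j+t.val) (by omega), hbbpos (j+(t.val+1)) (by omega)]
  have hset : {v : Fin n → ℕ | ∃ i, 1 ≤ i ∧ ∀ t : Fin n, v t = R (i + t.val)}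
      = Φ '' (Win q (n+1) 0 ∪ Win q (n+1) 1) := by
    ext v
    constructor
    · rintro ⟨i, hi1, hv⟩
      rcases Nat.lt_or_ge i 2 with hi2 | hi2
      · -- i = 1 : use the J-window
        have hi1' : i = 1 := by omega
        subst hi1'
        refine ⟨fun t : Fin (n+1) => q (J + t.val), Or.inl ⟨J, hJ1, hJev, fun t => rfl⟩, ?_⟩
        funext t
        have hc1 : (Φ (fun t : Fin (n+1) => q (J + t.val))) t
            = (2 + (if q (J + t.val) = 1 then 0 else 1)) - (if q (J + (t.val + 1)) = 1 then 0 else 1) := by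
          simp only [hΦdef, Fin.coe_castSucc, Fin.val_succ]
        rw [hc1, hv t, hRf (1 + t.val) (by omega), show 1+t.val-1 = t.val by omega,
          show 1+t.val = t.val+1 by omega]
        have hsucc : q (J + (t.val + 1)) = q (t.val + 1) :=
          hJqp (t.val+1) (by omega) (by have := t.isLt; omega)
        rw [hsucc, hbbpos (t.val+1) (by omega)]
        rcases Nat.eq_zero_or_pos t.val with h0 | h0
        · rw [h0]
          norm_num
          rw [hJq, hbb0]
          norm_num
        · rw [hJqp t.val (by omega) (by have := t.isLt; omega), hbbpos t.val (by omega)]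
      · -- i ≥ 2 : genuine window at j = i - 1
        obtain ⟨j, rfl⟩ : ∃ j, i = j + 1 := ⟨i-1, by omega⟩
        have hj1 : 1 ≤ j := by omega
        have hmem : (fun t : Fin (n+1) => q (j + t.val)) ∈ Win q (n+1) 0 ∪ Win q (n+1) 1 := by
          rcases Nat.lt_or_ge (j % 2) 1 with h | h
          · exact Or.inl ⟨j, hj1, by omega, fun t => rfl⟩
          · exact Or.inr ⟨j, hj1, by omega, fun t => rfl⟩
        refine ⟨_, hmem, ?_⟩
        funext t
        have hc1 : (Φ (fun t : Fin (n+1) => q (j + t.val))) t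
            = (2 + (if q (j + t.val) = 1 then 0 else 1)) - (if q (j + (t.val + 1)) = 1 then 0 else 1) := by
          simp only [hΦdef, Fin.coe_castSucc, Fin.val_succ]
        rw [hc1, hPhiR j hj1 t, hv t]
    · rintro ⟨w, hw, rfl⟩
      have hocc : ∃ j, 1 ≤ j ∧ ∀ t : Fin (n+1), w t = q (j + t.val) := by
        rcases hw with ⟨j, h1, h2, h3⟩ | ⟨j, h1, h2, h3⟩ <;> exact ⟨j, h1, h3⟩
      obtain ⟨j, hj1, hwj⟩ := hocc
      refine ⟨j+1, by omega, ?_⟩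
      intro t
      have hc1 : Φ w t
          = (2 + (if q (j + t.val) = 1 then 0 else 1)) - (if q (j + (t.val + 1)) = 1 then 0 else 1) := by
        have e1 : w t.castSucc = q (j + t.val) := by
          rw [hwj t.castSucc]
          rfl
        have e2 : w t.succ = q (j + (t.val + 1)) := by
          rw [hwj t.succ]
          rfl
        simp only [hΦdef, e1, e2]
      rw [hc1, hPhiR j hj1 t]
  have hinj : Set.InjOn Φ (Win q (n+1) 0 ∪ Win q (n+1) 1) := by
    intro w hw w' hw' heq
    have hocc : ∀ {u : Fin (n+1) → ℤ}, u ∈ Win q (n+1) 0 ∪ Win q (n+1) 1 →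
        ∃ j, 1 ≤ j ∧ ∀ t : Fin (n+1), u t = q (j + t.val) := by
      intro u hu
      rcases hu with ⟨j, h1, h2, h3⟩ | ⟨j, h1, h2, h3⟩ <;> exact ⟨j, h1, h3⟩
    obtain ⟨j, hj1, hwj⟩ := hocc hw
    obtain ⟨j', hj'1, hwj'⟩ := hocc hw'
    set A : ℕ → ℕ := fun t => if q (j + t) = 1 then 0 else 1 with hAdef
    set A' : ℕ → ℕ := fun t => if q (j' + t) = 1 then 0 else 1 with hA'def
    have hAb : ∀ t, A t ≤ 1 := by intro t; simp only [hAdef]; split <;> omega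
    have hA'b : ∀ t, A' t ≤ 1 := by intro t; simp only [hA'def]; split <;> omega
    have hrel : ∀ t, t < n → A t + A' (t+1) = A' t + A (t+1) := by
      intro t ht
      have h1 := congrFun heq ⟨t, ht⟩
      have e1 : w (⟨t, ht⟩ : Fin n).castSucc = q (j + t) := by rw [hwj]; rfl
      have e2 : w (⟨t, ht⟩ : Fin n).succ = q (j + (t + 1)) := by
        rw [hwj]; rfl
      have e3 : w' (⟨t, ht⟩ : Fin n).castSucc = q (j' + t) := by rw [hwj']; rfl
      have e4 : w' (⟨t, ht⟩ : Fin n).succ = q (j' + (t + 1)) := by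
        rw [hwj']; rfl
      simp only [hΦdef, e1, e2, e3, e4] at h1
      have b1 := hAb t; have b2 := hAb (t+1); have b3 := hA'b t; have b4 := hA'b (t+1)
      simp only [hAdef, hA'def] at b1 b2 b3 b4 ⊢
      omega
    -- a position with distinct adjacent A-values
    have hne2 : ∃ x, x + 2 ≤ 3 ∧ q (j + x) ≠ q (j + (x + 2)) := by
      rcases Nat.even_or_odd j with ⟨b, hb⟩ | ⟨b, hb⟩
      · -- j even: j + 1 odd
        refine ⟨1, by omega, ?_⟩
        have := pf_alt hqpf b
        rw [show 2*b+1 = j+1 by omega, show 2*b+3 = j + (1+2) by omega] at this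
        rw [this]
        intro hcon
        rcases hqval (j+1) (by omega) with h | h <;> rw [h] at hcon <;> norm_num at hcon
      · refine ⟨0, by omega, ?_⟩
        have := pf_alt hqpf b
        rw [show 2*b+1 = j+0 by omega, show 2*b+3 = j + (0+2) by omega] at this
        rw [this]
        intro hcon
        rcases hqval (j+0) (by omega) with h | h <;> rw [h] at hcon <;> norm_num at hcon
    obtain ⟨x, hx3, hxne⟩ := hne2
    have hAne : A x ≠ A (x+2) := by
      simp only [hAdef]
      rcases hqval (j+x) (by omega) with h | h <;>
        rcases hqval (j+(x+2)) (by omega) with h' | h'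
      · exact absurd (h.trans h'.symm) hxne
      · rw [h, h']; norm_num
      · rw [h, h']; norm_num
      · exact absurd (h.trans h'.symm) hxne
    have ht0 : ∃ t0, t0 + 1 ≤ 4 ∧ A t0 ≠ A (t0 + 1) := by
      by_cases h : A x = A (x+1)
      · exact ⟨x+1, by omega, by rw [← h, show x+1+1 = x+2 by omega]; exact hAne⟩
      · exact ⟨x, by omega, h⟩
    obtain ⟨t0, ht04, ht0ne⟩ := ht0
    have ht0n : t0 < n := by omega
    have hstart : A t0 = A' t0 ∧ A (t0+1) = A' (t0+1) := by
      have h1 := hrel t0 ht0n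
      have b1 := hAb t0; have b2 := hAb (t0+1); have b3 := hA'b t0; have b4 := hA'b (t0+1)
      omega
    have hup : ∀ s, t0 + s ≤ n → A (t0+s) = A' (t0+s) := by
      intro s
      induction s with
      | zero => intro _; exact hstart.1
      | succ s IH =>
        intro hs
        have h1 := IH (by omega)
        have h2 := hrel (t0+s) (by omega)
        have b2 := hAb (t0+s+1); have b4 := hA'b (t0+s+1)
        have e : t0 + (s+1) = t0 + s + 1 := by omega
        rw [e]
        omega
    have hdown : ∀ s, A (t0 - s) = A' (t0 - s) := by
      intro s
      induction s with
      | zero => exact hstart.1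
      | succ s IH =>
        by_cases hs : s < t0
        · have e : t0 - (s+1) + 1 = t0 - s := by omega
          have h2 := hrel (t0 - (s+1)) (by omega)
          rw [e] at h2
          have b1 := hAb (t0 - (s+1)); have b3 := hA'b (t0 - (s+1))
          omega
        · have e : t0 - (s+1) = t0 - s := by omega
          rw [e]; exact IH
    have hall : ∀ t, t ≤ n → A t = A' t := by
      intro t ht
      rcases le_or_gt t0 t with h | h
      · have := hup (t - t0) (by omega)
        rw [show t0 + (t - t0) = t by omega] at this
        exact this
      · have := hdown (t0 - t)
        rw [show t0 - (t0 - t) = t by omega] at this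
        exact this
    funext t
    have h1 : A t.val = A' t.val := hall t.val (by have := t.isLt; omega)
    rw [hwj t, hwj' t]
    simp only [hAdef, hA'def] at h1
    rcases hqval (j + t.val) (by omega) with hx | hx <;>
      rcases hqval (j' + t.val) (by omega) with hy | hy <;>
        rw [hx, hy] <;> rw [hx, hy] at h1 <;> norm_num at h1
  rw [hset, Set.ncard_image_of_injOn hinj, Pcount hc hqpf (n+1) (by omega)]
  ring
end
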